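/- arXiv:2503.10574 — 5 statements merged into one kernel-verified Lean document; each statement's English description precedes it below -/
import Mathlib

section
/- Let μ be a Borel probability measure on [0,1], let C₀ ≥ 0 and 0 ≤ ε < 1, and set â := (1+ε)·∫(θ² + (1-θ)²) dμ(θ). Suppose â < 1 and that f : ℕ → ℝ satisfies f(0) = 0 and, for every ℓ ≥ 1, f(ℓ) ≤ C₀ℓ² + (1+ε)·E[f(ℓ-1-R_ℓ) + f(R_ℓ)], where the expectation is over θ ~ μ and, conditionally on θ, R_ℓ ~ Binomial(ℓ-1, θ). Then f(ℓ) ≤ C₀·(2/(1-â))·ℓ² for all ℓ ∈ ℕ. -/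
/-!
Strong induction on `ℓ` with the hypothesis `f k ≤ K k²`, `K = 2 C₀ / (1 - â)`. For
`R ~ Binomial(n, θ)` the Bernstein moment identities give
`E[(n - R)² + R²] = n² (θ² + (1 - θ)²) + 2 n θ (1 - θ) ≤ (n + 1)² (θ² + (1 - θ)²)`,
the inequality because `θ (1 - θ) ≤ 1/4`. Integrating in `θ`, the recursion yields
`f ℓ ≤ C₀ ℓ² + â K ℓ² ≤ K ℓ²`, as `K (1 - â) = 2 C₀ ≥ C₀`.
-/

open MeasureTheory

/-- Expectation of `g (R_ℓ)` where `θ ~ μ` and, conditionally on `θ`,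
`R_ℓ ~ Binomial(ℓ-1, θ)`. -/
noncomputable def binExp (μ : Measure ℝ) (ℓ : ℕ) (g : ℕ → ℝ) : ℝ :=
  ∫ θ, ∑ k ∈ Finset.range ℓ,
    ((ℓ - 1).choose k : ℝ) * θ ^ k * (1 - θ) ^ (ℓ - 1 - k) * g k ∂μ

theorem ContinuousOn.integrable_of_ae_mem {X E : Type*} [TopologicalSpace X] [T2Space X]
    [MeasurableSpace X] [OpensMeasurableSpace X] [NormedAddCommGroup E] {μ : Measure X}
    [IsFiniteMeasureOnCompacts μ] {K : Set X} {f : X → E} (hf : ContinuousOn f K)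
    (hK : IsCompact K) (hμ : ∀ᵐ x ∂μ, x ∈ K) : Integrable f μ := by
  simpa only [IntegrableOn, Measure.restrict_eq_self_of_ae_mem hμ] using
    hf.integrableOn_compact (μ := μ) hK

section Binomial

variable (n : ℕ) (θ : ℝ)

theorem sum_choose_mul_sub_sq_add_sq :
    ∑ k ∈ Finset.range (n + 1), (n.choose k : ℝ) * θ ^ k * (1 - θ) ^ (n - k) *
        (((n - k : ℕ) : ℝ) ^ 2 + (k : ℝ) ^ 2)
      = (n : ℝ) ^ 2 * (θ ^ 2 + (1 - θ) ^ 2) + 2 * n * θ * (1 - θ) := by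
  set w : ℕ → ℝ := fun k => (n.choose k : ℝ) * θ ^ k * (1 - θ) ^ (n - k)
  have eval_bernstein (k : ℕ) : (bernsteinPolynomial ℝ n k).eval θ = w k := by
    simp [bernsteinPolynomial, w]
  have h0 : ∑ k ∈ Finset.range (n + 1), w k = 1 := by
    simpa [Polynomial.eval_finsetSum, eval_bernstein] using
      congrArg (Polynomial.eval θ) (bernsteinPolynomial.sum ℝ n)
  have h1 : ∑ k ∈ Finset.range (n + 1), k * w k = n * θ := by
    simpa [Polynomial.eval_finsetSum, eval_bernstein] using
      congrArg (Polynomial.eval θ) (bernsteinPolynomial.sum_smul ℝ n)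
  have h2 : ∑ k ∈ Finset.range (n + 1), (n * θ - k) ^ 2 * w k = n * θ * (1 - θ) := by
    simpa [Polynomial.eval_finsetSum, eval_bernstein] using
      congrArg (Polynomial.eval θ) (bernsteinPolynomial.variance ℝ n)
  calc ∑ k ∈ Finset.range (n + 1), w k * (((n - k : ℕ) : ℝ) ^ 2 + (k : ℝ) ^ 2)
      = ∑ k ∈ Finset.range (n + 1), (2 * ((n * θ - k) ^ 2 * w k)
          + (n ^ 2 - 2 * n ^ 2 * θ ^ 2) * w k + (4 * θ - 2) * n * (k * w k)) := by
        refine Finset.sum_congr rfl fun k hk => ?_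
        rw [Nat.cast_sub (Finset.mem_range_succ_iff.mp hk)]
        ring
    _ = (n : ℝ) ^ 2 * (θ ^ 2 + (1 - θ) ^ 2) + 2 * n * θ * (1 - θ) := by
        simp only [Finset.sum_add_distrib, ← Finset.mul_sum, h0, h1, h2]
        ring

theorem sum_choose_mul_sub_sq_add_sq_le :
    ∑ k ∈ Finset.range (n + 1), (n.choose k : ℝ) * θ ^ k * (1 - θ) ^ (n - k) *
        (((n - k : ℕ) : ℝ) ^ 2 + (k : ℝ) ^ 2)
      ≤ ((n : ℝ) + 1) ^ 2 * (θ ^ 2 + (1 - θ) ^ 2) := by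
  rw [sum_choose_mul_sub_sq_add_sq]
  nlinarith [sq_nonneg (2 * θ - 1), mul_nonneg n.cast_nonneg (sq_nonneg (2 * θ - 1))]

end Binomial

section BinExp

variable {μ : Measure ℝ}

theorem binExp_const_mul (ℓ : ℕ) (c : ℝ) (g : ℕ → ℝ) :
    binExp μ ℓ (fun k => c * g k) = c * binExp μ ℓ g := by
  rw [binExp, binExp, ← integral_const_mul]
  congr 1 with θ
  rw [Finset.mul_sum]
  exact Finset.sum_congr rfl fun k _ => by ring

variable [IsFiniteMeasure μ] (hμ : ∀ᵐ θ ∂μ, θ ∈ Set.Icc (0 : ℝ) 1)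
include hμ

theorem integrable_of_continuous_of_ae_mem_Icc {f : ℝ → ℝ} (hf : Continuous f) :
    Integrable f μ :=
  hf.continuousOn.integrable_of_ae_mem isCompact_Icc hμ

theorem binExp_mono {ℓ : ℕ} {g h : ℕ → ℝ} (hgh : ∀ k < ℓ, g k ≤ h k) :
    binExp μ ℓ g ≤ binExp μ ℓ h := by
  refine integral_mono_ae (integrable_of_continuous_of_ae_mem_Icc hμ (by fun_prop))
    (integrable_of_continuous_of_ae_mem_Icc hμ (by fun_prop)) ?_
  filter_upwards [hμ] with θ ⟨hθ₀, hθ₁⟩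
  have : 0 ≤ 1 - θ := sub_nonneg.2 hθ₁
  refine Finset.sum_le_sum fun k hk => ?_
  gcongr
  exact hgh k (Finset.mem_range.1 hk)

theorem binExp_sub_sq_add_sq_le (ℓ : ℕ) :
    binExp μ ℓ (fun k => ((ℓ - 1 - k : ℕ) : ℝ) ^ 2 + (k : ℝ) ^ 2)
      ≤ (ℓ : ℝ) ^ 2 * ∫ θ, (θ ^ 2 + (1 - θ) ^ 2) ∂μ := by
  rcases ℓ with _ | n
  · simp [binExp]
  rw [binExp, ← integral_const_mul]
  refine integral_mono (integrable_of_continuous_of_ae_mem_Icc hμ (by fun_prop))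
    (integrable_of_continuous_of_ae_mem_Icc hμ (by fun_prop)) fun θ => ?_
  simpa only [Nat.add_sub_cancel, Nat.cast_succ] using sum_choose_mul_sub_sq_add_sq_le n θ

theorem binExp_le_mul_sq_mul_integral {ℓ : ℕ} {K : ℝ} (hK : 0 ≤ K) {f : ℕ → ℝ}
    (hf : ∀ k < ℓ, f k ≤ K * (k : ℝ) ^ 2) :
    binExp μ ℓ (fun k => f (ℓ - 1 - k) + f k)
      ≤ K * (ℓ : ℝ) ^ 2 * ∫ θ, (θ ^ 2 + (1 - θ) ^ 2) ∂μ :=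
  calc binExp μ ℓ (fun k => f (ℓ - 1 - k) + f k)
      ≤ binExp μ ℓ (fun k => K * (((ℓ - 1 - k : ℕ) : ℝ) ^ 2 + (k : ℝ) ^ 2)) :=
        binExp_mono hμ fun k hk => by
          linarith [hf (ℓ - 1 - k) (by omega), hf k hk]
    _ = K * binExp μ ℓ (fun k => ((ℓ - 1 - k : ℕ) : ℝ) ^ 2 + (k : ℝ) ^ 2) :=
        binExp_const_mul ℓ K _
    _ ≤ K * (ℓ : ℝ) ^ 2 * ∫ θ, (θ ^ 2 + (1 - θ) ^ 2) ∂μ := by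
        rw [mul_assoc]
        exact mul_le_mul_of_nonneg_left (binExp_sub_sq_add_sq_le hμ ℓ) hK

end BinExp

theorem stmt0_general (μ : Measure ℝ) [IsProbabilityMeasure μ]
    (hsupp : μ (Set.Icc (0:ℝ) 1)ᶜ = 0)
    (C₀ ε : ℝ) (hC₀ : 0 ≤ C₀) (hε0 : 0 ≤ ε)
    (ahat : ℝ) (hahat : ahat = (1 + ε) * ∫ θ, (θ ^ 2 + (1 - θ) ^ 2) ∂μ)
    (hahat1 : ahat < 1)
    (f : ℕ → ℝ) (hf0 : f 0 = 0)
    (hfrec : ∀ ℓ : ℕ, 1 ≤ ℓ →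
      f ℓ ≤ C₀ * (ℓ : ℝ) ^ 2 + (1 + ε) * binExp μ ℓ (fun k => f (ℓ - 1 - k) + f k)) :
    ∀ ℓ : ℕ, f ℓ ≤ C₀ * (2 / (1 - ahat)) * (ℓ : ℝ) ^ 2 := by
  have hμ : ∀ᵐ θ ∂μ, θ ∈ Set.Icc (0:ℝ) 1 := mem_ae_iff.mpr hsupp
  set K := C₀ * (2 / (1 - ahat))
  have hgap : 0 < 1 - ahat := sub_pos.mpr hahat1
  have hK : 0 ≤ K := by positivity
  have hK_gap : K * (1 - ahat) = 2 * C₀ := by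
    simp only [K]
    field_simp
  intro ℓ
  induction ℓ using Nat.strong_induction_on with
  | _ ℓ ih =>
    rcases Nat.eq_zero_or_pos ℓ with rfl | hℓ
    · simp [hf0]
    have hE := mul_le_mul_of_nonneg_left (binExp_le_mul_sq_mul_integral hμ hK ih)
      (by linarith : (0:ℝ) ≤ 1 + ε)
    have hC₀ℓ : 0 ≤ C₀ * (ℓ : ℝ) ^ 2 := by positivity
    calc f ℓ ≤ C₀ * (ℓ : ℝ) ^ 2 + K * (ℓ : ℝ) ^ 2 * ahat := by
          rw [hahat]
          linarith [hfrec ℓ hℓ]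
      _ ≤ K * (ℓ : ℝ) ^ 2 := by
          linear_combination hC₀ℓ - (ℓ : ℝ) ^ 2 * hK_gap

theorem stmt0 (μ : Measure ℝ) [IsProbabilityMeasure μ]
    (hsupp : μ (Set.Icc (0:ℝ) 1)ᶜ = 0)
    (C₀ ε : ℝ) (hC₀ : 0 ≤ C₀) (hε0 : 0 ≤ ε) (hε1 : ε < 1)
    (ahat : ℝ) (hahat : ahat = (1 + ε) * ∫ θ, (θ ^ 2 + (1 - θ) ^ 2) ∂μ)
    (hahat1 : ahat < 1)
    (f : ℕ → ℝ) (hf0 : f 0 = 0)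
    (hfrec : ∀ ℓ : ℕ, 1 ≤ ℓ →
      f ℓ ≤ C₀ * (ℓ : ℝ) ^ 2 + (1 + ε) * binExp μ ℓ (fun k => f (ℓ - 1 - k) + f k)) :
    ∀ ℓ : ℕ, f ℓ ≤ C₀ * (2 / (1 - ahat)) * (ℓ : ℝ) ^ 2 :=
  stmt0_general μ hsupp C₀ ε hC₀ hε0 ahat hahat hahat1 f hf0 hfrec
end

section
/- Let Π be a Borel probability measure on [0,1] with h := E_{Θ~Π}[H_B(Θ)] > 0, and let Δ : ℕ → ℝ be the unique function with Δ(0) = 1 and, for ℓ ≥ 1, Δ(ℓ) = 1 + E[Δ(Γ_ℓ)]. Then there exists a finite constant C* (depending only on Π) such that |Δ(ℓ) - (1/h)·log₂ ℓ| ≤ C* for all ℓ ≥ 1. -/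
open MeasureTheory

/-- Binary entropy `H_B(p) = -p log₂ p - (1-p) log₂ (1-p)` (with `0 log 0 = 0`). -/
noncomputable def binEnt (p : ℝ) : ℝ :=
  -(p * Real.logb 2 p) - (1 - p) * Real.logb 2 (1 - p)

/-- Expectation of `g (Γ_ℓ)` where `θ ~ μ` and, conditionally on `θ`, `Γ_ℓ` is
`Binomial(ℓ-1, θ)` with probability `θ` and `Binomial(ℓ-1, 1-θ)` with probability `1-θ`. -/
noncomputable def gammaExp (μ : Measure ℝ) (ℓ : ℕ) (g : ℕ → ℝ) : ℝ :=
  ∫ θ, (θ * ∑ k ∈ Finset.range ℓ,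
          ((ℓ - 1).choose k : ℝ) * θ ^ k * (1 - θ) ^ (ℓ - 1 - k) * g k
      + (1 - θ) * ∑ k ∈ Finset.range ℓ,
          ((ℓ - 1).choose k : ℝ) * (1 - θ) ^ k * θ ^ (ℓ - 1 - k) * g k) ∂μ

/-!
Since `Γ_ℓ ≤ ℓ - 1`, a comparison principle holds: a function lying below (above) `Δ` at `0`
and satisfying the recursion with `≤` (`≥`) stays below (above) `Δ`. Write `H = ∫ H_B dΠ` in nats
and `b = 1 / H`. Conditionally on `θ`, Jensen's inequality for `log`, applied to `Γ_ℓ + 1` and to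
`1 / (Γ_ℓ + 1)`, gives `log ℓ - H_B(θ) ≤ E log (Γ_ℓ + 1) ≤ log (ℓ + 1) - H_B(θ)`; for the upper
bound the tangent-line errors of the two branches `θ` and `1 - θ` cancel exactly. Hence
`b log (ℓ + 1) + 1` is a supersolution. The lower bound loses `b (log (ℓ + 1) - log ℓ) ≤ b / ℓ`,
which the correction `K / (ℓ + 1) - K` pays for: `E [1 / (Γ_ℓ + 1)] ≥ (1 + 2 θ (1 - θ)) / ℓ`
for `ℓ ≥ 2`, and `∫ θ (1 - θ) dΠ > 0` because `H > 0`.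
-/

open Finset Real

noncomputable def binomWeight (n k : ℕ) (p : ℝ) : ℝ := n.choose k * p ^ k * (1 - p) ^ (n - k)

lemma binomWeight_eq_eval (n k : ℕ) (p : ℝ) :
    binomWeight n k p = (bernsteinPolynomial ℝ n k).eval p := by
  simp [binomWeight, bernsteinPolynomial]

lemma binomWeight_nonneg (n k : ℕ) {p : ℝ} (hp₀ : 0 ≤ p) (hp₁ : p ≤ 1) :
    0 ≤ binomWeight n k p := by
  have : 0 ≤ 1 - p := by linarith
  unfold binomWeight; positivity

lemma sum_binomWeight (n : ℕ) (p : ℝ) : ∑ k ∈ range (n + 1), binomWeight n k p = 1 := by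
  simpa [binomWeight_eq_eval, Polynomial.eval_finsetSum] using
    congrArg (Polynomial.eval p) (bernsteinPolynomial.sum ℝ n)

lemma sum_binomWeight_mul_cast (n : ℕ) (p : ℝ) :
    ∑ k ∈ range (n + 1), binomWeight n k p * k = n * p := by
  simpa [binomWeight_eq_eval, Polynomial.eval_finsetSum, mul_comm] using
    congrArg (Polynomial.eval p) (bernsteinPolynomial.sum_smul ℝ n)

lemma succ_mul_binomWeight_div (n k : ℕ) (p : ℝ) :
    (n + 1) * p * (binomWeight n k p / (k + 1)) = binomWeight (n + 1) (k + 1) p := by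
  have h : ((n : ℝ) + 1) * n.choose k = (n + 1).choose (k + 1) * ((k : ℝ) + 1) := by
    exact_mod_cast Nat.add_one_mul_choose_eq n k
  rw [binomWeight, binomWeight, Nat.add_sub_add_right]
  field_simp
  linear_combination p ^ (k + 1) * (1 - p) ^ (n - k) * h

lemma succ_mul_sum_binomWeight_div (n : ℕ) (p : ℝ) :
    (n + 1) * p * ∑ k ∈ range (n + 1), binomWeight n k p / (k + 1) = 1 - (1 - p) ^ (n + 1) := by
  have h := sum_binomWeight (n + 1) p
  rw [sum_range_succ'] at h
  simp only [mul_sum, succ_mul_binomWeight_div]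
  have h₀ : binomWeight (n + 1) 0 p = (1 - p) ^ (n + 1) := by simp [binomWeight]
  linarith

lemma sum_binomWeight_mul_log_le (n : ℕ) {p : ℝ} (hp₀ : 0 ≤ p) (hp₁ : p ≤ 1) :
    ∑ k ∈ range (n + 1), binomWeight n k p * log (k + 1) ≤ log (n * p + 1) := by
  have hmean : ∑ k ∈ range (n + 1), binomWeight n k p * ((k : ℝ) + 1) = n * p + 1 := by
    simp only [mul_add, mul_one, sum_add_distrib, sum_binomWeight, sum_binomWeight_mul_cast]
  simpa only [smul_eq_mul, hmean] using strictConcaveOn_log_Ioi.concaveOn.le_map_sum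
    (fun k _ => binomWeight_nonneg n k hp₀ hp₁) (sum_binomWeight n p)
    (fun k _ => show (k : ℝ) + 1 ∈ Set.Ioi 0 by simp only [Set.mem_Ioi]; positivity)

lemma log_succ_mul_le_sum_binomWeight_mul_log (n : ℕ) {p : ℝ} (hp₀ : 0 < p) (hp₁ : p ≤ 1) :
    log ((n + 1) * p) ≤ ∑ k ∈ range (n + 1), binomWeight n k p * log (k + 1) := by
  have hnp : 0 < ((n : ℝ) + 1) * p := by positivity
  have hq : (1 - p) ^ (n + 1) < 1 := pow_lt_one₀ (by linarith) (by linarith) (by omega)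
  have hinv : ∑ k ∈ range (n + 1), binomWeight n k p * (1 / ((k : ℝ) + 1))
      = (1 - (1 - p) ^ (n + 1)) / ((n + 1) * p) := by
    rw [eq_div_iff hnp.ne', mul_comm, ← succ_mul_sum_binomWeight_div]
    simp only [mul_one_div]
  have hjensen := strictConcaveOn_log_Ioi.concaveOn.le_map_sum
    (fun k _ => binomWeight_nonneg n k hp₀.le hp₁) (sum_binomWeight n p)
    (fun k _ => show 1 / ((k : ℝ) + 1) ∈ Set.Ioi 0 by simp only [Set.mem_Ioi]; positivity)
  simp only [smul_eq_mul] at hjensen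
  rw [hinv] at hjensen
  simp only [one_div, log_inv, mul_neg, sum_neg_distrib] at hjensen
  have hle : log ((1 - (1 - p) ^ (n + 1)) / ((n + 1) * p)) ≤ log (1 / ((n + 1) * p)) :=
    log_le_log (div_pos (by linarith) hnp)
      (by gcongr; linarith [pow_nonneg (by linarith : 0 ≤ 1 - p) (n + 1)])
  rw [one_div, log_inv] at hle
  linarith

noncomputable def binomExp (n : ℕ) (p : ℝ) : (ℕ → ℝ) →ₗ[ℝ] ℝ :=
  ∑ k ∈ range (n + 1), binomWeight n k p • LinearMap.proj k

/-- `mixExp n θ g` is `E[g Γ_{n+1} | Θ = θ]`. -/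
noncomputable def mixExp (n : ℕ) (θ : ℝ) : (ℕ → ℝ) →ₗ[ℝ] ℝ :=
  θ • binomExp n θ + (1 - θ) • binomExp n (1 - θ)

lemma binomExp_apply (n : ℕ) (p : ℝ) (g : ℕ → ℝ) :
    binomExp n p g = ∑ k ∈ range (n + 1), binomWeight n k p * g k := by
  simp [binomExp]

lemma mixExp_apply (n : ℕ) (θ : ℝ) (g : ℕ → ℝ) :
    mixExp n θ g = θ * binomExp n θ g + (1 - θ) * binomExp n (1 - θ) g := rfl

lemma binomExp_one (n : ℕ) (p : ℝ) : binomExp n p 1 = 1 := by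
  simp [binomExp_apply, sum_binomWeight]

lemma mixExp_one (n : ℕ) (θ : ℝ) : mixExp n θ 1 = 1 := by
  simp [mixExp_apply, binomExp_one]

lemma mixExp_zero (θ : ℝ) (g : ℕ → ℝ) : mixExp 0 θ g = g 0 := by
  simp only [mixExp_apply, binomExp_apply, zero_add, range_one, binomWeight, zero_tsub, pow_zero,
    mul_one, sum_singleton, Nat.choose_self, Nat.cast_one, one_mul, sub_sub_cancel]
  ring

lemma binomExp_mono {n : ℕ} {p : ℝ} (hp₀ : 0 ≤ p) (hp₁ : p ≤ 1) {f g : ℕ → ℝ}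
    (hfg : ∀ k ≤ n, f k ≤ g k) : binomExp n p f ≤ binomExp n p g := by
  simp only [binomExp_apply]
  exact sum_le_sum fun k hk => mul_le_mul_of_nonneg_left
    (hfg k (Nat.lt_succ_iff.mp (mem_range.mp hk))) (binomWeight_nonneg n k hp₀ hp₁)

lemma mixExp_mono {n : ℕ} {θ : ℝ} (hθ : θ ∈ Set.Icc (0 : ℝ) 1) {f g : ℕ → ℝ}
    (hfg : ∀ k ≤ n, f k ≤ g k) : mixExp n θ f ≤ mixExp n θ g := by
  obtain ⟨hθ₀, hθ₁⟩ := hθ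
  simp only [mixExp_apply]
  exact add_le_add (mul_le_mul_of_nonneg_left (binomExp_mono hθ₀ hθ₁ hfg) hθ₀)
    (mul_le_mul_of_nonneg_left (binomExp_mono (by linarith) (by linarith) hfg) (by linarith))

lemma continuous_mixExp (n : ℕ) (g : ℕ → ℝ) : Continuous fun θ => mixExp n θ g := by
  simp only [mixExp_apply, binomExp_apply, binomWeight]
  fun_prop

lemma mul_log_mul_add_one_le (n : ℕ) {p : ℝ} (hp : 0 ≤ p) :
    p * log (n * p + 1) ≤ p * log (n + 2) + p * log p + (1 - 2 * p) / (n + 2) := by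
  rcases hp.eq_or_lt with rfl | hp
  · simp only [mul_zero, zero_add, log_one, zero_mul, log_zero, add_zero, sub_zero, one_div,
      inv_nonneg]
    positivity
  have htangent := log_le_sub_one_of_pos (x := (n * p + 1) / ((n + 2) * p)) (by positivity)
  rw [log_div (by positivity) (by positivity), log_mul (by positivity) hp.ne'] at htangent
  have hslope : p * ((n * p + 1) / ((n + 2) * p) - 1) = (1 - 2 * p) / (n + 2) := by
    field_simp; ring
  nlinarith [mul_le_mul_of_nonneg_left htangent hp.le]

lemma mul_log_le_mul_binomExp_log (n : ℕ) {p : ℝ} (hp₀ : 0 ≤ p) (hp₁ : p ≤ 1) :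
    p * log (n + 1) + p * log p ≤ p * binomExp n p (fun k => log (k + 1)) := by
  rcases hp₀.eq_or_lt with rfl | hp
  · simp
  rw [← mul_add, ← log_mul (by positivity) hp.ne', binomExp_apply]
  exact mul_le_mul_of_nonneg_left (log_succ_mul_le_sum_binomWeight_mul_log n hp hp₁) hp.le

lemma binEntropy_eq (θ : ℝ) : binEntropy θ = -(θ * log θ) - (1 - θ) * log (1 - θ) := by
  simp only [binEntropy, log_inv, mul_neg]
  ring

lemma binEnt_eq_binEntropy_div (p : ℝ) : binEnt p = binEntropy p / log 2 := by
  rw [binEntropy_eq]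
  simp only [binEnt, logb]
  ring

lemma mixExp_log_le (n : ℕ) {θ : ℝ} (hθ : θ ∈ Set.Icc (0 : ℝ) 1) :
    mixExp n θ (fun k => log (k + 1)) ≤ log (n + 2) - binEntropy θ := by
  obtain ⟨hθ₀, hθ₁⟩ := hθ
  have hθ₀' : 0 ≤ 1 - θ := by linarith
  have hjensen (p : ℝ) (hp₀ : 0 ≤ p) (hp₁ : p ≤ 1) :
      p * binomExp n p (fun k => log (k + 1)) ≤ p * log (n * p + 1) := by
    rw [binomExp_apply]
    exact mul_le_mul_of_nonneg_left (sum_binomWeight_mul_log_le n hp₀ hp₁) hp₀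
  have hcancel : (1 - 2 * θ) / (n + 2) + (1 - 2 * (1 - θ)) / (n + 2) = 0 := by ring
  rw [mixExp_apply, binEntropy_eq]
  linarith [hjensen θ hθ₀ hθ₁, hjensen (1 - θ) hθ₀' (by linarith),
    mul_log_mul_add_one_le n hθ₀, mul_log_mul_add_one_le n hθ₀']

lemma log_sub_binEntropy_le_mixExp_log (n : ℕ) {θ : ℝ} (hθ : θ ∈ Set.Icc (0 : ℝ) 1) :
    log (n + 1) - binEntropy θ ≤ mixExp n θ (fun k => log (k + 1)) := by
  obtain ⟨hθ₀, hθ₁⟩ := hθ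
  rw [mixExp_apply, binEntropy_eq]
  linarith [mul_log_le_mul_binomExp_log n hθ₀ hθ₁,
    mul_log_le_mul_binomExp_log n (p := 1 - θ) (by linarith) (by linarith)]

lemma mixExp_inv_ge {n : ℕ} (hn : 1 ≤ n) {θ : ℝ} (hθ : θ ∈ Set.Icc (0 : ℝ) 1) :
    (1 + 2 * θ * (1 - θ)) / (n + 1) ≤ mixExp n θ (fun k => 1 / (k + 1)) := by
  obtain ⟨hθ₀, hθ₁⟩ := hθ
  have hexact : (n + 1) * mixExp n θ (fun k => 1 / (k + 1))
      = 2 - θ ^ (n + 1) - (1 - θ) ^ (n + 1) := by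
    have h₁ := succ_mul_sum_binomWeight_div n θ
    have h₂ := succ_mul_sum_binomWeight_div n (1 - θ)
    rw [sub_sub_cancel] at h₂
    simp only [mixExp_apply, binomExp_apply, mul_one_div]
    linear_combination h₁ + h₂
  have hθpow : θ ^ (n + 1) ≤ θ ^ 2 := pow_le_pow_of_le_one hθ₀ hθ₁ (by omega)
  have hθpow' : (1 - θ) ^ (n + 1) ≤ (1 - θ) ^ 2 :=
    pow_le_pow_of_le_one (by linarith) (by linarith) (by omega)
  rw [div_le_iff₀ (by positivity)]
  nlinarith

lemma gammaExp_succ (μ : Measure ℝ) (n : ℕ) (g : ℕ → ℝ) :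
    gammaExp μ (n + 1) g = ∫ θ, mixExp n θ g ∂μ := by
  simp only [gammaExp, mixExp_apply, binomExp_apply, binomWeight, Nat.add_sub_cancel,
    sub_sub_cancel]

section Integration

variable {μ : Measure ℝ} [IsFiniteMeasure μ]

lemma integrable_of_continuous (hsupp : μ (Set.Icc (0 : ℝ) 1)ᶜ = 0) {f : ℝ → ℝ}
    (hf : Continuous f) : Integrable f μ := by
  rw [← Measure.restrict_eq_self_of_ae_mem (mem_ae_iff.mpr hsupp)]
  exact hf.integrableOn_Icc

lemma gammaExp_mono (hsupp : μ (Set.Icc (0 : ℝ) 1)ᶜ = 0) {n : ℕ} {f g : ℕ → ℝ}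
    (hfg : ∀ k ≤ n, f k ≤ g k) : gammaExp μ (n + 1) f ≤ gammaExp μ (n + 1) g := by
  rw [gammaExp_succ, gammaExp_succ]
  refine integral_mono_ae (integrable_of_continuous hsupp (continuous_mixExp n f))
    (integrable_of_continuous hsupp (continuous_mixExp n g)) ?_
  filter_upwards [mem_ae_iff.mpr hsupp] with θ hθ
  exact mixExp_mono hθ hfg

lemma le_of_subsolution_of_supersolution (hsupp : μ (Set.Icc (0 : ℝ) 1)ᶜ = 0) {f g : ℕ → ℝ}
    (h₀ : f 0 ≤ g 0) (hf : ∀ n, f (n + 1) ≤ 1 + gammaExp μ (n + 1) f)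
    (hg : ∀ n, 1 + gammaExp μ (n + 1) g ≤ g (n + 1)) (ℓ : ℕ) : f ℓ ≤ g ℓ := by
  induction ℓ using Nat.strong_induction_on with
  | _ ℓ ih =>
    cases ℓ with
    | zero => exact h₀
    | succ n =>
      have := gammaExp_mono hsupp fun k (hk : k ≤ n) => ih k (by omega)
      linarith [hf n, hg n]

lemma integral_mul_one_sub_pos (hsupp : μ (Set.Icc (0 : ℝ) 1)ᶜ = 0)
    (hH : 0 < ∫ θ, binEntropy θ ∂μ) : 0 < ∫ θ, θ * (1 - θ) ∂μ := by
  have hnonneg : 0 ≤ᵐ[μ] fun θ : ℝ => θ * (1 - θ) := by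
    filter_upwards [mem_ae_iff.mpr hsupp] with θ ⟨hθ₀, hθ₁⟩
    exact mul_nonneg hθ₀ (by linarith)
  refine (integral_nonneg_of_ae hnonneg).lt_of_ne fun hzero => hH.ne' ?_
  have hae := (integral_eq_zero_iff_of_nonneg_ae hnonneg
    (integrable_of_continuous hsupp (by fun_prop))).mp hzero.symm
  refine integral_eq_zero_of_ae ?_
  filter_upwards [hae] with θ hθ
  rcases mul_eq_zero.mp hθ with h | h
  · simp [h]
  · simp [show θ = 1 by linarith]

end Integration

noncomputable def upperBarrier (b : ℝ) : ℕ → ℝ := b • (fun k : ℕ => log ((k : ℝ) + 1)) + 1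

noncomputable def lowerBarrier (b K : ℝ) : ℕ → ℝ :=
  b • (fun k : ℕ => log ((k : ℝ) + 1)) + K • (fun k : ℕ => 1 / ((k : ℝ) + 1)) - K • 1

lemma upperBarrier_apply (b : ℝ) (k : ℕ) : upperBarrier b k = b * log (k + 1) + 1 := by
  simp [upperBarrier]

lemma lowerBarrier_apply (b K : ℝ) (k : ℕ) :
    lowerBarrier b K k = b * log (k + 1) + K / (k + 1) - K := by
  simp [lowerBarrier, div_eq_mul_inv]

lemma log_add_one_sub_log_le {x : ℝ} (hx : 0 < x) : log (x + 1) - log x ≤ 1 / x := by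
  have h := log_le_sub_one_of_pos (x := (x + 1) / x) (by positivity)
  rw [log_div (by positivity) hx.ne'] at h
  have : (x + 1) / x - 1 = 1 / x := by field_simp; ring
  linarith

section Barriers

variable {μ : Measure ℝ} [IsProbabilityMeasure μ]

lemma integral_affine_binEntropy (hsupp : μ (Set.Icc (0 : ℝ) 1)ᶜ = 0) (c α β : ℝ) :
    ∫ θ, c + α * binEntropy θ + β * (θ * (1 - θ)) ∂μ
      = c + α * ∫ θ, binEntropy θ ∂μ + β * ∫ θ, θ * (1 - θ) ∂μ := by
  have hH := integrable_of_continuous hsupp (μ := μ) binEntropy_continuous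
  have hq := integrable_of_continuous hsupp (μ := μ) (f := fun θ => θ * (1 - θ)) (by fun_prop)
  have hcH : Integrable (fun θ => c + α * binEntropy θ) μ :=
    (integrable_const c).add (hH.const_mul α)
  rw [integral_add hcH (hq.const_mul β), integral_add (integrable_const c) (hH.const_mul α),
    integral_const_mul, integral_const_mul]
  simp

lemma one_add_gammaExp_upperBarrier_le (hsupp : μ (Set.Icc (0 : ℝ) 1)ᶜ = 0) {b : ℝ}
    (hb : 0 ≤ b) (hbH : b * ∫ θ, binEntropy θ ∂μ = 1) (n : ℕ) :
    1 + gammaExp μ (n + 1) (upperBarrier b) ≤ upperBarrier b (n + 1) := by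
  have hpointwise : ∀ᵐ θ ∂μ,
      mixExp n θ (upperBarrier b)
        ≤ (b * log (n + 2) + 1) + (-b) * binEntropy θ + 0 * (θ * (1 - θ)) := by
    filter_upwards [mem_ae_iff.mpr hsupp] with θ hθ
    have := mul_le_mul_of_nonneg_left (mixExp_log_le n hθ) hb
    simp only [upperBarrier, map_add, map_smul, mixExp_one, smul_eq_mul]
    linarith
  have hintegral := integral_mono_ae (integrable_of_continuous hsupp (continuous_mixExp n _))
    (integrable_of_continuous hsupp (by fun_prop)) hpointwise
  rw [integral_affine_binEntropy hsupp] at hintegral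
  rw [gammaExp_succ, upperBarrier_apply]
  push_cast
  rw [show (n : ℝ) + 1 + 1 = n + 2 by ring]
  linarith

lemma lowerBarrier_le_one_add_gammaExp (hsupp : μ (Set.Icc (0 : ℝ) 1)ᶜ = 0) {b K : ℝ}
    (hb : 0 ≤ b) (hbH : b * ∫ θ, binEntropy θ ∂μ = 1) (hbK : 2 * b ≤ K)
    (hbKm : b ≤ 2 * K * ∫ θ, θ * (1 - θ) ∂μ) (n : ℕ) :
    lowerBarrier b K (n + 1) ≤ 1 + gammaExp μ (n + 1) (lowerBarrier b K) := by
  have hK : 0 ≤ K := by linarith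
  rw [gammaExp_succ, lowerBarrier_apply]
  rcases Nat.eq_zero_or_pos n with rfl | hn
  · simp only [zero_add, Nat.cast_one, mixExp_zero, lowerBarrier_apply, CharP.cast_eq_zero,
      log_one, mul_zero, div_one, sub_self, integral_zero, add_zero, tsub_le_iff_right]
    nlinarith [log_two_lt_d9]
  have hpointwise : ∀ᵐ θ ∂μ, (b * log (n + 1) + K / (n + 1) - K) + (-b) * binEntropy θ
      + 2 * K / (n + 1) * (θ * (1 - θ)) ≤ mixExp n θ (lowerBarrier b K) := by
    filter_upwards [mem_ae_iff.mpr hsupp] with θ hθ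
    have hlog := mul_le_mul_of_nonneg_left (log_sub_binEntropy_le_mixExp_log n hθ) hb
    have hinv := mul_le_mul_of_nonneg_left (mixExp_inv_ge hn hθ) hK
    simp only [lowerBarrier, map_add, map_sub, map_smul, mixExp_one, smul_eq_mul]
    have : K * ((1 + 2 * θ * (1 - θ)) / (n + 1))
        = K / (n + 1) + 2 * K / (n + 1) * (θ * (1 - θ)) := by ring
    linarith
  have hintegral := integral_mono_ae (integrable_of_continuous hsupp (by fun_prop))
    (integrable_of_continuous hsupp (continuous_mixExp n _)) hpointwise
  rw [integral_affine_binEntropy hsupp] at hintegral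
  have hn' : (0 : ℝ) < n + 1 := by positivity
  have hlog : b * log (n + 2) ≤ b * log (n + 1) + b / (n + 1) := by
    have := mul_le_mul_of_nonneg_left (log_add_one_sub_log_le hn') hb
    rw [mul_sub, mul_one_div, show (n : ℝ) + 1 + 1 = n + 2 by ring] at this
    linarith
  have hgain : b / (n + 1) ≤ 2 * K / (n + 1) * ∫ θ, θ * (1 - θ) ∂μ := by
    rw [div_mul_eq_mul_div]; gcongr
  have hinv : K / (n + 2) ≤ K / (n + 1) := by gcongr; linarith
  push_cast
  rw [show (n : ℝ) + 1 + 1 = n + 2 by ring]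
  linarith

end Barriers

theorem exists_abs_sub_log_div_integral_binEntropy_le (μ : Measure ℝ) [IsProbabilityMeasure μ]
    (hsupp : μ (Set.Icc (0 : ℝ) 1)ᶜ = 0) (hH : 0 < ∫ θ, binEntropy θ ∂μ) (Δ : ℕ → ℝ)
    (hΔ₀ : Δ 0 = 1) (hΔ : ∀ n, Δ (n + 1) = 1 + gammaExp μ (n + 1) Δ) :
    ∃ C, ∀ ℓ : ℕ, 1 ≤ ℓ → |Δ ℓ - log ℓ / ∫ θ, binEntropy θ ∂μ| ≤ C := by
  set H := ∫ θ, binEntropy θ ∂μ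
  set m := ∫ θ, θ * (1 - θ) ∂μ
  set b := H⁻¹
  have hb : 0 < b := inv_pos.mpr hH
  have hbH : b * H = 1 := inv_mul_cancel₀ hH.ne'
  have hm : 0 < m := integral_mul_one_sub_pos hsupp hH
  -- `K` is large enough that the gain `2 K m / (n + 1)` absorbs `b (log (n + 2) - log (n + 1))`.
  set K := b / (2 * m) + 2 * b
  have hbK : 2 * b ≤ K := by simp only [K]; linarith [div_pos hb (by positivity : 0 < 2 * m)]
  have hbKm : b ≤ 2 * K * m := by
    have : 2 * K * m = b + 4 * b * m := by simp only [K]; field_simp; ring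
    nlinarith
  have hupper := le_of_subsolution_of_supersolution hsupp (by simp [hΔ₀, upperBarrier_apply])
    (fun n => (hΔ n).le) (one_add_gammaExp_upperBarrier_le hsupp hb.le hbH)
  have hlower := le_of_subsolution_of_supersolution hsupp (by simp [hΔ₀, lowerBarrier_apply])
    (lowerBarrier_le_one_add_gammaExp hsupp hb.le hbH hbK hbKm) (fun n => (hΔ n).ge)
  refine ⟨b + 1 + K, fun ℓ hℓ => ?_⟩
  have hℓ : (0 : ℝ) < ℓ := by exact_mod_cast hℓ
  have hlog_le : log ℓ ≤ log (ℓ + 1) := log_le_log hℓ (by linarith)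
  have hlog_ge : log (ℓ + 1) ≤ log ℓ + 1 := by
    have := log_add_one_sub_log_le hℓ
    have : 1 / (ℓ : ℝ) ≤ 1 := by rw [div_le_one hℓ]; exact_mod_cast hℓ
    linarith
  have hupper := hupper ℓ
  have hlower := hlower ℓ
  rw [upperBarrier_apply] at hupper
  rw [lowerBarrier_apply] at hlower
  have h₁ := mul_le_mul_of_nonneg_left hlog_le hb.le
  have h₂ := mul_le_mul_of_nonneg_left hlog_ge hb.le
  have h₃ : 0 ≤ K / (ℓ + 1) := by positivity
  rw [div_eq_inv_mul, abs_le]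
  constructor <;> linarith

theorem stmt1 (μ : Measure ℝ) [IsProbabilityMeasure μ]
    (hsupp : μ (Set.Icc (0:ℝ) 1)ᶜ = 0)
    (h : ℝ) (hdef : h = ∫ θ, binEnt θ ∂μ) (hpos : 0 < h)
    (Δ : ℕ → ℝ) (hΔ0 : Δ 0 = 1)
    (hΔrec : ∀ ℓ : ℕ, 1 ≤ ℓ → Δ ℓ = 1 + gammaExp μ ℓ Δ) :
    ∃ C : ℝ, ∀ ℓ : ℕ, 1 ≤ ℓ → |Δ ℓ - (1 / h) * Real.logb 2 ℓ| ≤ C := by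
  have hlog2 : 0 < log 2 := log_pos one_lt_two
  have hh : h = (∫ θ, binEntropy θ ∂μ) / log 2 := by
    simp only [hdef, binEnt_eq_binEntropy_div, integral_div]
  have hH : 0 < ∫ θ, binEntropy θ ∂μ := by
    rw [hh] at hpos
    exact (div_pos_iff_of_pos_right hlog2).mp hpos
  have hscale (ℓ : ℕ) : 1 / h * logb 2 ℓ = log ℓ / ∫ θ, binEntropy θ ∂μ := by
    rw [hh, logb]
    field_simp
  simpa only [hscale] using exists_abs_sub_log_div_integral_binEntropy_le μ hsupp hH Δ hΔ0
    fun n => hΔrec (n + 1) (by omega)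
end

section
/- Let Π be a Borel probability measure on [0,1] with h := E_{Θ~Π}[H_B(Θ)] > 0, and let m₁ : ℕ → ℝ be the unique function with m₁(0) = 0 and, for ℓ ≥ 1, m₁(ℓ) = ℓ + E[m₁(ℓ-1-R_ℓ) + m₁(R_ℓ)]. Let (ℓ_k) be any strictly increasing sequence of integers with ℓ_k ≥ 2 and ℓ_{k+1}/ℓ_k → 1 as k → ∞. Then (m₁(ℓ_{k+1}) - m₁(ℓ_k))/(ℓ_k·log₂ ℓ_k) → 0 as k → ∞. -/
open MeasureTheory Filter

/-!
Write `d n = m₁ (n + 1) - m₁ n`. Differencing the recursion with the degree-elevation identity for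
Bernstein polynomials gives `d (n + 1) = 1 + E[Θ d(R) + (1 - Θ) d(n - R)]` with `R ~ Bin(n, Θ)`, so
`d ≥ 0`. By Jensen, `E[Θ log₂ (R + 1) + (1 - Θ) log₂ (n - R + 1)] ≤ log₂ (n + 1) - H_B(Θ) + O(1/n)`,
so the entropy deficit `h` pays for the additive `1` and induction gives `d n = O(log n)`. Summing
over `[ℓ_k, ℓ_{k+1})` bounds the difference by `(ℓ_{k+1} - ℓ_k) O(log ℓ_k) = o(ℓ_k log ℓ_k)`.
-/

open Finset Real Topology

noncomputable def bernsteinMean (n : ℕ) (g : ℕ → ℝ) (θ : ℝ) : ℝ :=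
  ∑ k ∈ range (n + 1), (n.choose k : ℝ) * θ ^ k * (1 - θ) ^ (n - k) * g k

section bernsteinMean

variable {n : ℕ} {g g' : ℕ → ℝ} {θ : ℝ}

lemma binExp_succ (μ : Measure ℝ) (n : ℕ) (g : ℕ → ℝ) :
    binExp μ (n + 1) g = ∫ θ, bernsteinMean n g θ ∂μ := by
  simp only [binExp, bernsteinMean, Nat.add_sub_cancel]

lemma continuous_bernsteinMean (n : ℕ) (g : ℕ → ℝ) : Continuous (bernsteinMean n g) := by
  unfold bernsteinMean; fun_prop

lemma bernsteinMean_add (n : ℕ) (g g' : ℕ → ℝ) (θ : ℝ) :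
    bernsteinMean n (fun k => g k + g' k) θ = bernsteinMean n g θ + bernsteinMean n g' θ := by
  simp only [bernsteinMean, mul_add, sum_add_distrib]

lemma bernsteinMean_sub (n : ℕ) (g g' : ℕ → ℝ) (θ : ℝ) :
    bernsteinMean n (fun k => g k - g' k) θ = bernsteinMean n g θ - bernsteinMean n g' θ := by
  simp only [bernsteinMean, mul_sub, sum_sub_distrib]

lemma sum_bernsteinWeight (n : ℕ) (θ : ℝ) :
    ∑ k ∈ range (n + 1), (n.choose k : ℝ) * θ ^ k * (1 - θ) ^ (n - k) = 1 := by
  simpa [Polynomial.eval_finsetSum, bernsteinPolynomial] using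
    congrArg (Polynomial.eval θ) (bernsteinPolynomial.sum ℝ n)

lemma bernsteinMean_affine (n : ℕ) (a b : ℝ) (g : ℕ → ℝ) (θ : ℝ) :
    bernsteinMean n (fun k => a * g k + b) θ = a * bernsteinMean n g θ + b := by
  calc _ = a * bernsteinMean n g θ
        + b * ∑ k ∈ range (n + 1), (n.choose k : ℝ) * θ ^ k * (1 - θ) ^ (n - k) := by
        simp only [bernsteinMean, mul_sum, ← sum_add_distrib]
        exact sum_congr rfl fun k _ => by ring
    _ = _ := by rw [sum_bernsteinWeight, mul_one]

lemma bernsteinMean_natCast (n : ℕ) (θ : ℝ) :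
    bernsteinMean n (fun k => (k : ℝ)) θ = n * θ := by
  have hmean := congrArg (Polynomial.eval θ) (bernsteinPolynomial.sum_smul ℝ n)
  simp only [Polynomial.eval_finsetSum, bernsteinPolynomial, Polynomial.eval_mul,
    Polynomial.eval_pow, Polynomial.eval_sub, Polynomial.eval_one, Polynomial.eval_X,
    Polynomial.eval_natCast, nsmul_eq_mul] at hmean
  rw [← hmean, bernsteinMean]
  exact sum_congr rfl fun k _ => by ring

lemma bernsteinMean_reflect (n : ℕ) (g : ℕ → ℝ) (θ : ℝ) :
    bernsteinMean n (fun k => g (n - k)) θ = bernsteinMean n g (1 - θ) := by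
  rw [bernsteinMean, ← sum_range_reflect]
  refine sum_congr rfl fun k hk => ?_
  have hk : k ≤ n := Nat.lt_succ_iff.1 (mem_range.1 hk)
  rw [Nat.add_sub_cancel, Nat.sub_sub_self hk, Nat.choose_symm hk, sub_sub_cancel]
  ring

lemma bernsteinMean_succ (n : ℕ) (g : ℕ → ℝ) (θ : ℝ) :
    bernsteinMean (n + 1) g θ =
      θ * bernsteinMean n (fun k => g (k + 1)) θ + (1 - θ) * bernsteinMean n g θ := by
  have h := sum_choose_succ_mul (fun i j => θ ^ i * (1 - θ) ^ j * g i) n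
  convert h using 1
  · exact sum_congr rfl fun k _ => by ring
  · rw [add_comm, bernsteinMean, bernsteinMean, mul_sum, mul_sum]
    congr 1 <;> refine sum_congr rfl fun k hk => ?_
    · rw [Nat.sub_add_comm (Nat.lt_succ_iff.1 (mem_range.1 hk))]; ring
    · ring

lemma bernsteinWeight_nonneg (h0 : 0 ≤ θ) (h1 : θ ≤ 1) (n k : ℕ) :
    0 ≤ (n.choose k : ℝ) * θ ^ k * (1 - θ) ^ (n - k) := by
  have : 0 ≤ 1 - θ := sub_nonneg.2 h1
  positivity

lemma bernsteinMean_mono (h0 : 0 ≤ θ) (h1 : θ ≤ 1) (hg : ∀ k ≤ n, g k ≤ g' k) :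
    bernsteinMean n g θ ≤ bernsteinMean n g' θ :=
  sum_le_sum fun k hk => mul_le_mul_of_nonneg_left (hg k (Nat.lt_succ_iff.1 (mem_range.1 hk)))
    (bernsteinWeight_nonneg h0 h1 n k)

lemma bernsteinMean_logb_le (h0 : 0 ≤ θ) (h1 : θ ≤ 1) :
    bernsteinMean n (fun k => logb 2 (k + 1)) θ ≤ logb 2 (n * θ + 1) := by
  have hlogb : logb 2 = fun x => (log 2)⁻¹ • log x := funext fun x => by
    rw [logb, div_eq_inv_mul, smul_eq_mul]
  have hconc : ConcaveOn ℝ (Set.Ioi 0) (logb 2) := hlogb ▸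
    strictConcaveOn_log_Ioi.concaveOn.smul (inv_nonneg.2 (log_nonneg one_le_two))
  have hmean := bernsteinMean_affine n 1 1 (fun k => (k : ℝ)) θ
  simp only [one_mul, bernsteinMean_natCast] at hmean
  rw [← hmean]
  exact hconc.le_map_sum (fun k _ => bernsteinWeight_nonneg h0 h1 n k)
    (sum_bernsteinWeight n θ) (fun k _ => Set.mem_Ioi.2 (by positivity))

end bernsteinMean

lemma mul_logb_mul_add_one_le {x y : ℝ} (hx : 0 ≤ x) (hy : 0 < y) :
    x * logb 2 (x * y + 1) ≤ x * logb 2 x + x * logb 2 y + 1 / (y * log 2) := by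
  rcases hx.eq_or_lt with rfl | hx₀
  · simp only [zero_mul, zero_add]; positivity
  have hxy : 0 < x * y := mul_pos hx₀ hy
  have hlog : log (x * y + 1) ≤ log x + log y + 1 / (x * y) := by
    have := log_le_sub_one_of_pos (show 0 < (x * y + 1) / (x * y) by positivity)
    rw [log_div (by positivity) hxy.ne', log_mul hx₀.ne' hy.ne'] at this
    have : (x * y + 1) / (x * y) - 1 = 1 / (x * y) := by field_simp; ring
    linarith
  have hmul : x * log (x * y + 1) ≤ x * log x + x * log y + 1 / y := by
    calc _ ≤ x * (log x + log y + 1 / (x * y)) := mul_le_mul_of_nonneg_left hlog hx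
      _ = _ := by field_simp
  have hlog2 := log_pos one_lt_two
  simp only [logb, mul_div_assoc']
  calc _ ≤ (x * log x + x * log y + 1 / y) / log 2 := div_le_div_of_nonneg_right hmul hlog2.le
    _ = _ := by field_simp

lemma continuous_binEnt : Continuous binEnt := by
  have h : Continuous fun p : ℝ => p * logb 2 p := by
    simpa only [logb, mul_div_assoc] using continuous_mul_log.div_const (log 2)
  exact h.neg.sub (h.comp (continuous_const.sub continuous_id))

/-- `E[θ g(R) + (1 - θ) g(n - R)]` for `R ~ Bin(n, θ)`, written with `n - R ~ Bin(n, 1 - θ)`. -/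
noncomputable def splitMean (n : ℕ) (g : ℕ → ℝ) (θ : ℝ) : ℝ :=
  θ * bernsteinMean n g θ + (1 - θ) * bernsteinMean n g (1 - θ)

section splitMean

variable {n : ℕ} {g g' : ℕ → ℝ} {θ : ℝ}

lemma continuous_splitMean (n : ℕ) (g : ℕ → ℝ) : Continuous (splitMean n g) := by
  have := continuous_bernsteinMean n g
  unfold splitMean; fun_prop

lemma splitMean_affine (n : ℕ) (a b : ℝ) (g : ℕ → ℝ) (θ : ℝ) :
    splitMean n (fun k => a * g k + b) θ = a * splitMean n g θ + b := by
  simp only [splitMean, bernsteinMean_affine]; ring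

lemma splitMean_mono (h0 : 0 ≤ θ) (h1 : θ ≤ 1) (hg : ∀ k ≤ n, g k ≤ g' k) :
    splitMean n g θ ≤ splitMean n g' θ := by
  have h0' : 0 ≤ 1 - θ := sub_nonneg.2 h1
  have h1' : 1 - θ ≤ 1 := sub_le_self 1 h0
  unfold splitMean
  gcongr
  · exact bernsteinMean_mono h0 h1 hg
  · exact bernsteinMean_mono h0' h1' hg

lemma splitMean_logb_le (h0 : 0 ≤ θ) (h1 : θ ≤ 1) :
    splitMean n (fun k => logb 2 (k + 1)) θ ≤
      logb 2 (n + 1) - binEnt θ + 2 / ((n + 1) * log 2) := by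
  have key : ∀ x : ℝ, 0 ≤ x → x ≤ 1 → x * bernsteinMean n (fun k => logb 2 (k + 1)) x ≤
      x * logb 2 x + x * logb 2 (n + 1) + 1 / ((n + 1) * log 2) := fun x hx0 hx1 =>
    calc _ ≤ x * logb 2 (x * (n + 1) + 1) := by
          refine mul_le_mul_of_nonneg_left ((bernsteinMean_logb_le hx0 hx1).trans ?_) hx0
          exact logb_le_logb_of_le one_lt_two (by positivity) (by nlinarith)
      _ ≤ _ := mul_logb_mul_add_one_le hx0 (by positivity)
  have := key θ h0 h1
  have := key (1 - θ) (sub_nonneg.2 h1) (sub_le_self 1 h0)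
  unfold splitMean binEnt
  linear_combination this + ‹θ * _ ≤ _›

end splitMean

lemma Continuous.integrable_of_ae_mem_compact {α : Type*} [TopologicalSpace α] [MeasurableSpace α]
    [OpensMeasurableSpace α] [T2Space α] {μ : Measure α} [IsFiniteMeasure μ] {K : Set α}
    (hK : IsCompact K) (hμ : ∀ᵐ x ∂μ, x ∈ K) {f : α → ℝ} (hf : Continuous f) : Integrable f μ := by
  rw [← Measure.restrict_eq_self_of_ae_mem hμ]
  exact hf.continuousOn.integrableOn_compact hK

section Recursion

variable {μ : Measure ℝ}

lemma eq_add_integral_bernsteinMean {m : ℕ → ℝ}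
    (hmrec : ∀ ℓ : ℕ, 1 ≤ ℓ → m ℓ = ℓ + binExp μ ℓ (fun k => m (ℓ - 1 - k) + m k)) (n : ℕ) :
    m (n + 1) = n + 1 + ∫ θ, (bernsteinMean n m θ + bernsteinMean n m (1 - θ)) ∂μ := by
  rw [hmrec (n + 1) le_add_self, binExp_succ]
  simp only [Nat.cast_add, Nat.cast_one, Nat.add_sub_cancel, bernsteinMean_add,
    bernsteinMean_reflect, add_comm (bernsteinMean n _ (1 - _))]

lemma increment_eq_one_add_integral_splitMean [IsFiniteMeasure μ]
    (hμ : ∀ᵐ θ ∂μ, θ ∈ Set.Icc (0 : ℝ) 1) {m : ℕ → ℝ}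
    (hmrec : ∀ ℓ : ℕ, 1 ≤ ℓ → m ℓ = ℓ + binExp μ ℓ (fun k => m (ℓ - 1 - k) + m k)) (n : ℕ) :
    m (n + 2) - m (n + 1) = 1 + ∫ θ, splitMean n (fun k => m (k + 1) - m k) θ ∂μ := by
  have hint : ∀ n, Integrable (fun θ => bernsteinMean n m θ + bernsteinMean n m (1 - θ)) μ :=
    fun n => Continuous.integrable_of_ae_mem_compact isCompact_Icc hμ
      (by have := continuous_bernsteinMean n m; fun_prop)
  rw [eq_add_integral_bernsteinMean hmrec (n + 1), eq_add_integral_bernsteinMean hmrec n,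
    add_sub_add_comm, ← integral_sub (hint _) (hint _)]
  push_cast
  congr 1
  · ring
  · refine integral_congr_ae (Eventually.of_forall fun θ => ?_)
    simp only [splitMean, bernsteinMean_sub, bernsteinMean_succ]
    ring

lemma nonneg_of_splitMean_rec {d : ℕ → ℝ} (hμ : ∀ᵐ θ ∂μ, θ ∈ Set.Icc (0 : ℝ) 1)
    (hd : ∀ n, d (n + 1) = 1 + ∫ θ, splitMean n d θ ∂μ) (h0 : 0 ≤ d 0) (n : ℕ) : 0 ≤ d n := by
  induction n using Nat.strong_induction_on with
  | _ n ih =>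
    rcases n with _ | n
    · exact h0
    rw [hd]
    have : 0 ≤ ∫ θ, splitMean n d θ ∂μ := by
      refine integral_nonneg_of_ae (hμ.mono fun θ hθ => ?_)
      have := splitMean_mono hθ.1 hθ.2 (g := fun _ => 0) (g' := d) fun k hk =>
        ih k (Nat.lt_succ_of_le hk)
      simpa [splitMean, bernsteinMean] using this
    linarith

variable [IsProbabilityMeasure μ]

lemma increment_succ_le_of_le_logb {d : ℕ → ℝ} (hμ : ∀ᵐ θ ∂μ, θ ∈ Set.Icc (0 : ℝ) 1)
    (hd : ∀ n, d (n + 1) = 1 + ∫ θ, splitMean n d θ ∂μ) {C : ℝ} (hC0 : 0 ≤ C) {n : ℕ}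
    (hC : 1 ≤ C * (∫ θ, binEnt θ ∂μ - 2 / ((n + 1) * log 2)))
    (hle : ∀ k ≤ n, d k ≤ C * (logb 2 (k + 1) + 1)) :
    d (n + 1) ≤ C * (logb 2 ((n + 1 : ℕ) + 1) + 1) := by
  have hbin := Continuous.integrable_of_ae_mem_compact isCompact_Icc hμ continuous_binEnt
  have hpoint : ∀ᵐ θ ∂μ, splitMean n d θ ≤
      (C * (logb 2 (n + 1) + 2 / ((n + 1) * log 2)) + C) - C * binEnt θ := by
    filter_upwards [hμ] with θ ⟨h0, h1⟩
    calc splitMean n d θ ≤ splitMean n (fun k => C * logb 2 (k + 1) + C) θ :=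
          splitMean_mono h0 h1 fun k hk => by linarith [hle k hk]
      _ = C * splitMean n (fun k => logb 2 (k + 1)) θ + C := splitMean_affine ..
      _ ≤ C * (logb 2 (n + 1) - binEnt θ + 2 / ((n + 1) * log 2)) + C := by
          gcongr; exact splitMean_logb_le h0 h1
      _ = _ := by ring
  have hint : ∫ θ, splitMean n d θ ∂μ ≤
      ∫ θ, ((C * (logb 2 (n + 1) + 2 / ((n + 1) * log 2)) + C) - C * binEnt θ) ∂μ :=
    integral_mono_ae ((continuous_splitMean n d).integrable_of_ae_mem_compact isCompact_Icc hμ)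
      ((integrable_const _).sub (hbin.const_mul C)) hpoint
  rw [integral_sub (integrable_const _) (hbin.const_mul C), integral_const_mul,
    integral_const, probReal_univ, one_smul] at hint
  have hmono : logb 2 ((n : ℝ) + 1) ≤ logb 2 ((n + 1 : ℕ) + 1) :=
    logb_le_logb_of_le one_lt_two (by positivity) (by push_cast; linarith)
  rw [hd]
  nlinarith

lemma exists_le_mul_logb_of_splitMean_rec {d : ℕ → ℝ} (hμ : ∀ᵐ θ ∂μ, θ ∈ Set.Icc (0 : ℝ) 1)
    (hd : ∀ n, d (n + 1) = 1 + ∫ θ, splitMean n d θ ∂μ) (hpos : 0 < ∫ θ, binEnt θ ∂μ) :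
    ∃ C, 0 ≤ C ∧ ∀ n, d n ≤ C * (logb 2 (n + 1) + 1) := by
  set h := ∫ θ, binEnt θ ∂μ
  have hlog2 := log_pos one_lt_two
  -- past `N` the deficit `h - 2 / ((n + 1) log 2)` is at least `h / 2`, and `C ≥ 2 / h`
  obtain ⟨N, hN⟩ := exists_nat_ge (4 / (h * log 2))
  obtain ⟨B, hB⟩ := ((Set.finite_Iic N).image d).bddAbove
  set C := max (2 / h) B
  have hC0 : 0 ≤ C := le_max_of_le_left (by positivity)
  refine ⟨C, hC0, fun n => ?_⟩
  induction n using Nat.strong_induction_on with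
  | _ n ih =>
    rcases le_or_gt n N with hn | hn
    · have hlog : 0 ≤ logb 2 ((n : ℝ) + 1) := logb_nonneg one_lt_two (by simp)
      calc d n ≤ B := hB (Set.mem_image_of_mem d hn)
        _ ≤ C := le_max_right _ _
        _ ≤ C * (logb 2 (n + 1) + 1) := le_mul_of_one_le_right hC0 (by linarith)
    obtain ⟨n, rfl⟩ := Nat.exists_eq_add_of_lt hn
    refine increment_succ_le_of_le_logb hμ hd hC0 ?_ fun k hk => ih k (by omega)
    have hε : 2 / ((↑(N + n) + 1) * log 2) ≤ h / 2 := by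
      rw [div_le_iff₀ (by positivity)]
      rw [div_le_iff₀ (by positivity)] at hN
      push_cast
      nlinarith
    calc (1 : ℝ) = 2 / h * (h / 2) := by field_simp
      _ ≤ C * (h - 2 / ((↑(N + n) + 1) * log 2)) := by
        gcongr
        · exact le_max_left _ _
        · linarith

end Recursion

lemma sub_le_mul_of_increment_le {f : ℕ → ℝ} {B : ℝ} {l m : ℕ} (hlm : l ≤ m)
    (hB : ∀ i < m, f (i + 1) - f i ≤ B) : f m - f l ≤ (m - l) * B := by
  induction m, hlm using Nat.le_induction with
  | base => simp
  | succ m hlm ih =>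
    have := ih fun i hi => hB i (by omega)
    have := hB m (lt_add_one m)
    push_cast
    linarith

lemma tendsto_sub_div_mul_logb_of_increment_le {f : ℕ → ℝ} {C : ℝ} (hC : 0 ≤ C)
    (hf : Monotone f) (hinc : ∀ n, f (n + 1) - f n ≤ C * (logb 2 (n + 1) + 1))
    {ℓ : ℕ → ℕ} (hℓ : Monotone ℓ) (hℓ2 : ∀ k, 2 ≤ ℓ k)
    (hratio : Tendsto (fun k => (ℓ (k + 1) : ℝ) / ℓ k) atTop (𝓝 1)) :
    Tendsto (fun k => (f (ℓ (k + 1)) - f (ℓ k)) / (ℓ k * logb 2 (ℓ k))) atTop (𝓝 0) := by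
  have hlogb : ∀ k, 1 ≤ logb 2 (ℓ k) := fun k => by
    rw [le_logb_iff_rpow_le one_lt_two (by have := hℓ2 k; positivity)]
    exact_mod_cast (by simpa using hℓ2 k)
  have hden : ∀ k, 0 < (ℓ k : ℝ) * logb 2 (ℓ k) := fun k => by
    have := hℓ2 k; have := hlogb k; positivity
  refine squeeze_zero'
    (Eventually.of_forall fun k => div_nonneg (sub_nonneg.2 (hf (hℓ k.le_succ))) (hden k).le)
    ?_ (by simpa using ((hratio.sub_const 1).const_mul (3 * C)))
  filter_upwards [hratio.eventually_lt_const one_lt_two] with k hk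
  have hl : (0 : ℝ) < ℓ k := by have := hℓ2 k; positivity
  have hlm : (ℓ k : ℝ) ≤ ℓ (k + 1) := by exact_mod_cast hℓ k.le_succ
  have hm2l : (ℓ (k + 1) : ℝ) ≤ 2 * ℓ k := by rw [div_lt_iff₀ hl] at hk; linarith
  have hlogm : logb 2 (ℓ (k + 1)) ≤ logb 2 (ℓ k) + 1 := by
    have := logb_le_logb_of_le one_lt_two (by linarith) hm2l
    rw [logb_mul two_ne_zero hl.ne', logb_self_eq_one one_lt_two] at this
    linarith
  have hsub := sub_le_mul_of_increment_le (B := C * (logb 2 (ℓ (k + 1)) + 1)) (hℓ k.le_succ)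
    fun i hi => (hinc i).trans (by gcongr; exacts [one_lt_two, by exact_mod_cast hi])
  rw [div_le_iff₀ (hden k)]
  calc _ ≤ ((ℓ (k + 1) : ℝ) - ℓ k) * (C * (logb 2 (ℓ (k + 1)) + 1)) := hsub
    _ ≤ ((ℓ (k + 1) : ℝ) - ℓ k) * (3 * C * logb 2 (ℓ k)) :=
      mul_le_mul_of_nonneg_left (by nlinarith [hlogb k]) (by linarith)
    _ = 3 * C * ((ℓ (k + 1) : ℝ) / ℓ k - 1) * (ℓ k * logb 2 (ℓ k)) := by
      field_simp

theorem stmt10 (μ : Measure ℝ) [IsProbabilityMeasure μ]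
    (hsupp : μ (Set.Icc (0:ℝ) 1)ᶜ = 0)
    (h : ℝ) (hdef : h = ∫ θ, binEnt θ ∂μ) (hpos : 0 < h)
    (m₁ : ℕ → ℝ) (hm0 : m₁ 0 = 0)
    (hmrec : ∀ ℓ : ℕ, 1 ≤ ℓ →
      m₁ ℓ = (ℓ : ℝ) + binExp μ ℓ (fun k => m₁ (ℓ - 1 - k) + m₁ k))
    (ℓ : ℕ → ℕ) (hmono : StrictMono ℓ) (hℓ2 : ∀ k, 2 ≤ ℓ k)
    (hratio : Tendsto (fun k => (ℓ (k + 1) : ℝ) / (ℓ k : ℝ)) atTop (nhds 1)) :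
    Tendsto (fun k => (m₁ (ℓ (k + 1)) - m₁ (ℓ k)) / ((ℓ k : ℝ) * Real.logb 2 (ℓ k)))
      atTop (nhds 0) := by
  have hμ : ∀ᵐ θ ∂μ, θ ∈ Set.Icc (0 : ℝ) 1 := ae_iff.2 hsupp
  set d : ℕ → ℝ := fun n => m₁ (n + 1) - m₁ n
  have hrec : ∀ n, d (n + 1) = 1 + ∫ θ, splitMean n d θ ∂μ :=
    increment_eq_one_add_integral_splitMean hμ hmrec
  have hd0 : 0 ≤ d 0 := by simp [d, hmrec 1 le_rfl, binExp, hm0]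
  have hd_nonneg := nonneg_of_splitMean_rec hμ hrec hd0
  obtain ⟨C, hC, hdC⟩ := exists_le_mul_logb_of_splitMean_rec hμ hrec (hdef ▸ hpos)
  exact tendsto_sub_div_mul_logb_of_increment_le hC
    (monotone_nat_of_le_succ fun n => sub_nonneg.1 (hd_nonneg n)) hdC hmono.monotone hℓ2 hratio
end

section
/- Let θ ∈ [0,1], let (Y_i)_{i≥1} be i.i.d. Bernoulli(θ) random variables, let S_t = Y_1 + ⋯ + Y_t, and let M_t = S_t - θ·t. Then for every n ≥ 1 and every stopping time T (with respect to the natural filtration of (Y_i)) satisfying 1 ≤ T ≤ n almost surely, E[M_T²/T] ≤ 2·θ·(1-θ)·E[log₂(T+1)]. -/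
/-!
Write `M s = S_{s∧T} - θ (s∧T)` for the stopped centred walk. The event `{s < T}` is
determined by `Y_1, …, Y_s`, hence independent of `Y_{s+1}`; so the cross term vanishes when
`M (s+1)²` is expanded, and Wald's second identity `E[M s²] = θ(1-θ) E[s∧T]` follows by
induction on `s`.

The weights `w s = 1/(s(s+1))` for `s < n` and `w n = 1/n` telescope to `∑_{s=t}^n w s = 1/t`.
Since `M s = M n` for `s ≥ T`, this gives `M_T²/T ≤ ∑_{s=1}^n w s · M s²` pointwise, while
`∑_{s=1}^n w s · (s∧t)` is the harmonic number `H_t`. Taking expectations,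
`E[M_T²/T] ≤ θ(1-θ) E[H_T]`, and `H_t ≤ 1 + ln t ≤ 2 log₂(t+1)`.
-/

open MeasureTheory ProbabilityTheory

/-- The Bernoulli(θ) law on `ℝ`: mass `θ` at `1` and mass `1-θ` at `0`. -/
noncomputable def bernoulliLaw (θ : ℝ) : Measure ℝ :=
  ENNReal.ofReal θ • Measure.dirac (1 : ℝ) + ENNReal.ofReal (1 - θ) • Measure.dirac (0 : ℝ)

open Finset

lemma integral_bernoulliLaw {θ : ℝ} (hθ : θ ∈ Set.Icc (0 : ℝ) 1) (f : ℝ → ℝ) :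
    ∫ x, f x ∂bernoulliLaw θ = θ * f 1 + (1 - θ) * f 0 := by
  have hdirac (a : ℝ) : Integrable f (Measure.dirac a) :=
    (integrable_const (f a)).congr (ae_eq_dirac f).symm
  rw [bernoulliLaw, integral_add_measure ((hdirac 1).smul_measure ENNReal.ofReal_ne_top)
      ((hdirac 0).smul_measure ENNReal.ofReal_ne_top), integral_smul_measure,
    integral_smul_measure, integral_dirac, integral_dirac, ENNReal.toReal_ofReal hθ.1,
    ENNReal.toReal_ofReal (sub_nonneg.mpr hθ.2), smul_eq_mul, smul_eq_mul]

lemma ae_bernoulliLaw (θ : ℝ) : ∀ᵐ x ∂bernoulliLaw θ, x = 0 ∨ x = 1 := by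
  have hmeas : MeasurableSet {x : ℝ | x = 0 ∨ x = 1} :=
    (measurableSet_singleton 0).union (measurableSet_singleton 1)
  rw [bernoulliLaw, ae_add_measure_iff]
  exact ⟨Measure.ae_smul_measure ((ae_dirac_iff hmeas).mpr (Or.inr rfl)) _,
    Measure.ae_smul_measure ((ae_dirac_iff hmeas).mpr (Or.inl rfl)) _⟩

section Bernoulli

variable {Ω : Type*} [MeasurableSpace Ω] {P : Measure Ω} {θ : ℝ} {X : Ω → ℝ}

lemma ae_eq_zero_or_one_of_map_eq_bernoulliLaw (hX : Measurable X)
    (hlaw : P.map X = bernoulliLaw θ) : ∀ᵐ ω ∂P, X ω = 0 ∨ X ω = 1 :=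
  ae_of_ae_map hX.aemeasurable (hlaw ▸ ae_bernoulliLaw θ)

lemma memLp_of_map_eq_bernoulliLaw [IsFiniteMeasure P] (hX : Measurable X)
    (hlaw : P.map X = bernoulliLaw θ) (p : ENNReal) : MemLp X p P := by
  refine MemLp.of_bound hX.aestronglyMeasurable 1 ?_
  filter_upwards [ae_eq_zero_or_one_of_map_eq_bernoulliLaw hX hlaw] with ω hω
  rcases hω with h | h <;> simp [h]

lemma integral_of_map_eq_bernoulliLaw (hθ : θ ∈ Set.Icc (0 : ℝ) 1) (hX : Measurable X)
    (hlaw : P.map X = bernoulliLaw θ) : P[X] = θ := by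
  have h := integral_map (μ := P) (f := id) hX.aemeasurable aestronglyMeasurable_id
  rw [hlaw, integral_bernoulliLaw hθ] at h
  simp only [id] at h
  linarith

lemma variance_of_map_eq_bernoulliLaw (hθ : θ ∈ Set.Icc (0 : ℝ) 1) (hX : Measurable X)
    (hlaw : P.map X = bernoulliLaw θ) : Var[X; P] = θ * (1 - θ) := by
  rw [← variance_id_map hX.aemeasurable, hlaw, variance_eq_integral aemeasurable_id]
  simp only [id, integral_bernoulliLaw hθ]
  ring

end Bernoulli

section Filtration

variable {Ω β : Type*} [mβ : MeasurableSpace β] {Y : ℕ → Ω → β}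

abbrev sigmaBefore (Y : ℕ → Ω → β) (t : ℕ) : MeasurableSpace Ω :=
  ⨆ i ∈ range t, MeasurableSpace.comap (Y i) mβ

lemma sigmaBefore_le [mΩ : MeasurableSpace Ω] (hY : ∀ i, Measurable (Y i)) (t : ℕ) :
    sigmaBefore Y t ≤ mΩ :=
  iSup₂_le fun i _ => (hY i).comap_le

lemma sigmaBefore_mono : Monotone (sigmaBefore Y) := fun _ _ hst =>
  biSup_mono fun _ hi => mem_range.mpr ((mem_range.mp hi).trans_le hst)

lemma measurable_sigmaBefore {i t : ℕ} (hit : i < t) : Measurable[sigmaBefore Y t] (Y i) :=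
  Measurable.of_comap_le <| le_iSup₂ (f := fun j (_ : j ∈ range t) =>
    MeasurableSpace.comap (Y j) mβ) i (mem_range.mpr hit)

lemma indep_sigmaBefore_comap [MeasurableSpace Ω] {P : Measure Ω} (hY : ∀ i, Measurable (Y i))
    (hindep : iIndepFun Y P) (s : ℕ) :
    Indep (sigmaBefore Y s) (MeasurableSpace.comap (Y s) mβ) P := by
  have h := indep_iSup_of_disjoint (fun i => (hY i).comap_le)
    ((iIndepFun_iff_iIndep _ _ _).mp hindep)
    (show Disjoint (range s : Set ℕ) {s} by simp)
  simpa [sigmaBefore] using h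

lemma indepFun_of_measurable_sigmaBefore [MeasurableSpace Ω] {P : Measure Ω}
    (hY : ∀ i, Measurable (Y i)) (hindep : iIndepFun Y P) {s : ℕ} {f : Ω → ℝ}
    (hf : Measurable[sigmaBefore Y s] f) {g : β → ℝ} (hg : Measurable g) :
    IndepFun f (fun ω => g (Y s ω)) P := by
  rw [IndepFun_iff_Indep]
  refine indep_of_indep_of_le_right (indep_of_indep_of_le_left
    (indep_sigmaBefore_comap hY hindep s) hf.comap_le) ?_
  rw [show (fun ω => g (Y s ω)) = g ∘ Y s from rfl, ← MeasurableSpace.comap_comp]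
  exact MeasurableSpace.comap_mono hg.comap_le

lemma measurableSet_sigmaBefore_lt {T : Ω → ℕ}
    (hT : ∀ t, MeasurableSet[sigmaBefore Y t] {ω | T ω = t}) (s : ℕ) :
    MeasurableSet[sigmaBefore Y s] {ω | s < T ω} := by
  have h : {ω | s < T ω} = (⋃ j ∈ range (s + 1), {ω | T ω = j})ᶜ := by
    ext ω
    simp only [Set.mem_ofPred_eq, Set.mem_compl_iff, Set.mem_iUnion, mem_range, exists_prop,
      not_exists, not_and]
    exact ⟨fun h j hj hTj => by omega, fun h => not_le.mp fun hle => h _ (by omega) rfl⟩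
  rw [h]
  refine (MeasurableSet.biUnion (range (s + 1)).countable_toSet fun j hj => ?_).compl
  exact sigmaBefore_mono (Nat.lt_succ_iff.mp (mem_range.mp hj)) _ (hT j)

end Filtration

noncomputable def stopWeight (n s : ℕ) : ℝ :=
  if s < n then 1 / (s * (s + 1)) else 1 / n

lemma stopWeight_nonneg (n s : ℕ) : 0 ≤ stopWeight n s := by
  unfold stopWeight; split_ifs <;> positivity

lemma sum_Icc_stopWeight {t n : ℕ} (ht : 1 ≤ t) (htn : t ≤ n) :
    ∑ s ∈ Icc t n, stopWeight n s = 1 / t := by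
  have htel : ∑ s ∈ Ico t n, stopWeight n s
      = ∑ s ∈ Ico t n, ((-1 / (s + 1 : ℕ) : ℝ) - (-1 / s)) := by
    refine sum_congr rfl fun s hs => ?_
    obtain ⟨hts, hsn⟩ := mem_Ico.mp hs
    have hs0 : (0 : ℝ) < s := by exact_mod_cast (ht.trans hts)
    rw [stopWeight, if_pos hsn]
    push_cast
    field_simp
    ring
  rw [← Ico_add_one_right_eq_Icc, sum_Ico_succ_top htn, htel,
    sum_Ico_sub (fun s : ℕ => (-1 / s : ℝ)) htn, stopWeight, if_neg (lt_irrefl n)]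
  ring

lemma sq_div_le_sum_stopWeight_mul_sq {t n : ℕ} (ht : 1 ≤ t) (htn : t ≤ n) {a : ℕ → ℝ}
    (ha : ∀ s, t ≤ s → a s = a n) :
    a n ^ 2 / t ≤ ∑ s ∈ Icc 1 n, stopWeight n s * a s ^ 2 :=
  calc a n ^ 2 / t = ∑ s ∈ Icc t n, stopWeight n s * a n ^ 2 := by
        rw [← sum_mul, sum_Icc_stopWeight ht htn, one_div_mul_eq_div]
    _ = ∑ s ∈ Icc t n, stopWeight n s * a s ^ 2 :=
        sum_congr rfl fun s hs => by rw [ha s (mem_Icc.mp hs).1]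
    _ ≤ ∑ s ∈ Icc 1 n, stopWeight n s * a s ^ 2 :=
        sum_le_sum_of_subset_of_nonneg (Icc_subset_Icc_left ht) fun s _ _ =>
          mul_nonneg (stopWeight_nonneg n s) (sq_nonneg _)

lemma sum_stopWeight_mul_min {t n : ℕ} (htn : t ≤ n) :
    ∑ s ∈ Icc 1 n, stopWeight n s * ((min t s : ℕ) : ℝ) = harmonic t := by
  calc ∑ s ∈ Icc 1 n, stopWeight n s * ((min t s : ℕ) : ℝ)
      = ∑ s ∈ Icc 1 n, ∑ _k ∈ Icc 1 (min t s), stopWeight n s := by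
        refine sum_congr rfl fun s _ => ?_
        rw [sum_const, Nat.card_Icc, nsmul_eq_mul, Nat.add_sub_cancel, mul_comm]
    _ = ∑ k ∈ Icc 1 t, ∑ s ∈ Icc k n, stopWeight n s :=
        sum_comm' fun s k => by simp only [mem_Icc]; omega
    _ = ∑ k ∈ Icc 1 t, (1 / k : ℝ) :=
        sum_congr rfl fun k hk =>
          sum_Icc_stopWeight (mem_Icc.mp hk).1 ((mem_Icc.mp hk).2.trans htn)
    _ = harmonic t := by simp [harmonic_eq_sum_Icc]

lemma harmonic_le_two_mul_logb (t : ℕ) : (harmonic t : ℝ) ≤ 2 * Real.logb 2 (t + 1) := by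
  rcases Nat.eq_zero_or_pos t with rfl | ht
  · simp
  have ht1 : (1 : ℝ) ≤ t := by exact_mod_cast ht
  have hlog2 : 0 < Real.log 2 := Real.log_pos one_lt_two
  have hlog2_le : Real.log 2 ≤ 1 := by
    have := Real.log_le_sub_one_of_pos two_pos; linarith
  have hlog_le : Real.log 2 ≤ Real.log (t + 1) := Real.log_le_log two_pos (by linarith)
  have hlog_mono : Real.log t ≤ Real.log (t + 1) := Real.log_le_log (by linarith) (by linarith)
  have hlogt : 0 ≤ Real.log t := Real.log_nonneg ht1
  calc (harmonic t : ℝ) ≤ 1 + Real.log t := harmonic_le_one_add_log t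
    _ ≤ 2 * (Real.log (t + 1) / Real.log 2) := by
        rw [mul_div_assoc', le_div_iff₀ hlog2]; nlinarith
    _ = 2 * Real.logb 2 (t + 1) := rfl

section StoppedSum

variable {Ω : Type*} {Y : ℕ → Ω → ℝ} {m : ℝ} {T : Ω → ℕ}

noncomputable def stoppedCenteredSum (Y : ℕ → Ω → ℝ) (m : ℝ) (T : Ω → ℕ) (s : ℕ)
    (ω : Ω) : ℝ :=
  ∑ i ∈ range (min (T ω) s), (Y i ω - m)

lemma stoppedCenteredSum_zero : stoppedCenteredSum Y m T 0 = 0 := by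
  ext ω; simp [stoppedCenteredSum]

lemma stoppedCenteredSum_succ (s : ℕ) (ω : Ω) :
    stoppedCenteredSum Y m T (s + 1) ω
      = stoppedCenteredSum Y m T s ω + {ω | s < T ω}.indicator (fun ω => Y s ω - m) ω := by
  unfold stoppedCenteredSum
  by_cases h : s < T ω
  · rw [Set.indicator_of_mem (show ω ∈ {ω | s < T ω} from h),
      show min (T ω) (s + 1) = min (T ω) s + 1 by omega, sum_range_succ,
      show min (T ω) s = s by omega]
  · rw [Set.indicator_of_notMem (show ω ∉ {ω | s < T ω} from h),
      show min (T ω) (s + 1) = min (T ω) s by omega, add_zero]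

lemma stoppedCenteredSum_of_le {s : ℕ} {ω : Ω} (h : T ω ≤ s) :
    stoppedCenteredSum Y m T s ω = (∑ i ∈ range (T ω), Y i ω) - m * T ω := by
  rw [stoppedCenteredSum, min_eq_left h, sum_sub_distrib, sum_const, card_range, nsmul_eq_mul,
    mul_comm]

lemma measurable_sigmaBefore_stoppedCenteredSum
    (hT : ∀ s, MeasurableSet[sigmaBefore Y s] {ω | s < T ω}) (s : ℕ) :
    Measurable[sigmaBefore Y s] (stoppedCenteredSum Y m T s) := by
  induction s with
  | zero => rw [stoppedCenteredSum_zero]; exact measurable_const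
  | succ s ih =>
    rw [funext (stoppedCenteredSum_succ s)]
    exact (ih.mono (sigmaBefore_mono s.le_succ) le_rfl).add <|
      ((measurable_sigmaBefore s.lt_succ_self).sub measurable_const).indicator
        (sigmaBefore_mono s.le_succ _ (hT s))

variable [MeasurableSpace Ω] {P : Measure Ω}

lemma memLp_stoppedCenteredSum [IsFiniteMeasure P]
    (hY : ∀ i, Measurable (Y i)) (hL2 : ∀ i, MemLp (Y i) 2 P)
    (hT : ∀ s, MeasurableSet[sigmaBefore Y s] {ω | s < T ω}) (s : ℕ) :
    MemLp (stoppedCenteredSum Y m T s) 2 P := by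
  induction s with
  | zero => rw [stoppedCenteredSum_zero]; exact MemLp.zero
  | succ s ih =>
    rw [funext (stoppedCenteredSum_succ s)]
    exact ih.add (((hL2 s).sub (memLp_const m)).indicator (sigmaBefore_le hY s _ (hT s)) :)

lemma integral_mul_sub_eq_zero_of_measurable_sigmaBefore [IsProbabilityMeasure P]
    (hY : ∀ i, Measurable (Y i)) (hindep : iIndepFun Y P) {s : ℕ} (hYs : Integrable (Y s) P)
    (hmean : P[Y s] = m) {f : Ω → ℝ} (hf : Measurable[sigmaBefore Y s] f) :
    ∫ ω, f ω * (Y s ω - m) ∂P = 0 := by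
  have hindep_f := indepFun_of_measurable_sigmaBefore hY hindep hf (g := fun x => x - m)
    (measurable_id.sub_const m)
  change ∫ ω, (f * fun ω => Y s ω - m) ω ∂P = 0
  rw [hindep_f.integral_mul_eq_mul_integral
    (hf.mono (sigmaBefore_le hY s) le_rfl).aestronglyMeasurable
    ((hY s).sub_const m).aestronglyMeasurable, integral_sub hYs (integrable_const m), hmean,
    integral_const, probReal_univ, one_smul, sub_self, mul_zero]

lemma integral_mul_sq_sub_of_measurable_sigmaBefore (hY : ∀ i, Measurable (Y i))
    (hindep : iIndepFun Y P) {s : ℕ} {σ2 : ℝ} (hmean : P[Y s] = m) (hvar : Var[Y s; P] = σ2)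
    {f : Ω → ℝ} (hf : Measurable[sigmaBefore Y s] f) :
    ∫ ω, f ω * (Y s ω - m) ^ 2 ∂P = σ2 * ∫ ω, f ω ∂P := by
  have hindep_f := indepFun_of_measurable_sigmaBefore hY hindep hf (g := fun x => (x - m) ^ 2)
    ((measurable_id.sub_const m).pow_const 2)
  change ∫ ω, (f * fun ω => (Y s ω - m) ^ 2) ω ∂P = _
  rw [hindep_f.integral_mul_eq_mul_integral
    (hf.mono (sigmaBefore_le hY s) le_rfl).aestronglyMeasurable
    (((hY s).sub_const m).pow_const 2).aestronglyMeasurable, ← hvar,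
    variance_eq_integral (hY s).aemeasurable, hmean, mul_comm]

lemma integral_sq_stoppedCenteredSum_succ [IsProbabilityMeasure P] (hY : ∀ i, Measurable (Y i))
    (hindep : iIndepFun Y P) (hL2 : ∀ i, MemLp (Y i) 2 P) {σ2 : ℝ} (hmean : ∀ i, P[Y i] = m)
    (hvar : ∀ i, Var[Y i; P] = σ2) (hT : ∀ s, MeasurableSet[sigmaBefore Y s] {ω | s < T ω})
    (s : ℕ) :
    ∫ ω, stoppedCenteredSum Y m T (s + 1) ω ^ 2 ∂P
      = ∫ ω, stoppedCenteredSum Y m T s ω ^ 2 ∂P + σ2 * P.real {ω | s < T ω} := by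
  set A := {ω | s < T ω}
  set M := stoppedCenteredSum Y m T s
  have hA : MeasurableSet A := sigmaBefore_le hY s _ (hT s)
  have hMF : Measurable[sigmaBefore Y s] (A.indicator M) :=
    (measurable_sigmaBefore_stoppedCenteredSum hT s).indicator (hT s)
  have h1F : Measurable[sigmaBefore Y s] (A.indicator fun _ => (1 : ℝ)) :=
    measurable_const.indicator (hT s)
  have hM : MemLp M 2 P := memLp_stoppedCenteredSum hY hL2 hT s
  have hD : MemLp (fun ω => Y s ω - m) 2 P := (hL2 s).sub (memLp_const m)
  have hcross_int : Integrable (fun ω => 2 * (A.indicator M ω * (Y s ω - m))) P :=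
    ((indepFun_of_measurable_sigmaBefore hY hindep hMF
      (measurable_id.sub_const m)).integrable_mul
      ((hM.integrable one_le_two).indicator hA) (hD.integrable one_le_two)).const_mul 2
  have hsq_int : Integrable (fun ω => A.indicator (fun _ => (1 : ℝ)) ω * (Y s ω - m) ^ 2) P :=
    (indepFun_of_measurable_sigmaBefore hY hindep h1F
      ((measurable_id.sub_const m).pow_const 2)).integrable_mul
      ((integrable_const 1).indicator hA) hD.integrable_sq
  have hexpand (ω : Ω) : stoppedCenteredSum Y m T (s + 1) ω ^ 2 = M ω ^ 2
      + (2 * (A.indicator M ω * (Y s ω - m))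
        + A.indicator (fun _ => (1 : ℝ)) ω * (Y s ω - m) ^ 2) := by
    rw [stoppedCenteredSum_succ]
    by_cases h : s < T ω
    · simp only [A, M, Set.mem_ofPred_eq, h, Set.indicator_of_mem, one_mul]
      ring
    · simp [A, M, h]
  have hincr_int : Integrable (fun ω => 2 * (A.indicator M ω * (Y s ω - m))
      + A.indicator (fun _ => (1 : ℝ)) ω * (Y s ω - m) ^ 2) P := hcross_int.add hsq_int
  rw [funext hexpand, integral_add hM.integrable_sq hincr_int,
    integral_add hcross_int hsq_int, integral_const_mul,
    integral_mul_sub_eq_zero_of_measurable_sigmaBefore hY hindep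
      ((hL2 s).integrable one_le_two) (hmean s) hMF,
    integral_mul_sq_sub_of_measurable_sigmaBefore hY hindep (hmean s) (hvar s) h1F,
    integral_indicator_const 1 hA, smul_eq_mul, mul_one, mul_zero, zero_add]

lemma integrable_comp_of_le [IsFiniteMeasure P] {τ : Ω → ℕ} (hτ : Measurable τ) {n : ℕ}
    (hτn : ∀ ω, τ ω ≤ n) (g : ℕ → ℝ) : Integrable (fun ω => g (τ ω)) P :=
  Integrable.of_bound (measurable_from_nat.comp hτ).aestronglyMeasurable
    (∑ k ∈ range (n + 1), |g k|) <| ae_of_all _ fun ω =>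
      single_le_sum (f := fun k => |g k|) (fun _ _ => abs_nonneg _)
        (mem_range.mpr (Nat.lt_succ_of_le (hτn ω)))

theorem integral_sq_stoppedCenteredSum [IsProbabilityMeasure P] (hY : ∀ i, Measurable (Y i))
    (hindep : iIndepFun Y P) (hL2 : ∀ i, MemLp (Y i) 2 P) {σ2 : ℝ} (hmean : ∀ i, P[Y i] = m)
    (hvar : ∀ i, Var[Y i; P] = σ2) (hT : ∀ s, MeasurableSet[sigmaBefore Y s] {ω | s < T ω})
    (s : ℕ) :
    ∫ ω, stoppedCenteredSum Y m T s ω ^ 2 ∂P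
      = σ2 * ∫ ω, ((min (T ω) s : ℕ) : ℝ) ∂P := by
  induction s with
  | zero => simp [stoppedCenteredSum_zero]
  | succ s ih =>
    have hA : MeasurableSet {ω | s < T ω} := sigmaBefore_le hY s _ (hT s)
    have hTmeas : Measurable T := measurable_of_Ioi fun t => sigmaBefore_le hY t _ (hT t)
    have hmin (ω : Ω) : ((min (T ω) (s + 1) : ℕ) : ℝ)
        = (min (T ω) s : ℕ) + {ω | s < T ω}.indicator (fun _ => (1 : ℝ)) ω := by
      by_cases h : s < T ω
      · rw [Set.indicator_of_mem (show ω ∈ {ω | s < T ω} from h),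
          show min (T ω) (s + 1) = min (T ω) s + 1 by omega, Nat.cast_succ]
      · rw [Set.indicator_of_notMem (show ω ∉ {ω | s < T ω} from h),
          show min (T ω) (s + 1) = min (T ω) s by omega, add_zero]
    rw [integral_sq_stoppedCenteredSum_succ hY hindep hL2 hmean hvar hT, ih, funext hmin,
      integral_add (integrable_comp_of_le (hTmeas.min measurable_const)
        (fun ω => min_le_right _ _) Nat.cast) ((integrable_const 1).indicator hA),
      integral_indicator_const 1 hA, smul_eq_mul, mul_one, mul_add]

theorem integral_sq_stoppedCenteredSum_div_le [IsProbabilityMeasure P]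
    (hY : ∀ i, Measurable (Y i)) (hindep : iIndepFun Y P) (hL2 : ∀ i, MemLp (Y i) 2 P) {σ2 : ℝ}
    (hmean : ∀ i, P[Y i] = m) (hvar : ∀ i, Var[Y i; P] = σ2)
    (hT : ∀ s, MeasurableSet[sigmaBefore Y s] {ω | s < T ω}) {n : ℕ} (hT1 : ∀ ω, 1 ≤ T ω)
    (hTn : ∀ ω, T ω ≤ n) :
    ∫ ω, stoppedCenteredSum Y m T n ω ^ 2 / T ω ∂P ≤ σ2 * ∫ ω, (harmonic (T ω) : ℝ) ∂P := by
  have hTmeas : Measurable T := measurable_of_Ioi fun t => sigmaBefore_le hY t _ (hT t)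
  have hM (s : ℕ) : MemLp (stoppedCenteredSum Y m T s) 2 P :=
    memLp_stoppedCenteredSum hY hL2 hT s
  have hpoint (ω : Ω) : stoppedCenteredSum Y m T n ω ^ 2 / T ω
      ≤ ∑ s ∈ Icc 1 n, stopWeight n s * stoppedCenteredSum Y m T s ω ^ 2 :=
    sq_div_le_sum_stopWeight_mul_sq (a := fun s => stoppedCenteredSum Y m T s ω)
      (hT1 ω) (hTn ω) fun s hs => by
      rw [stoppedCenteredSum_of_le hs, stoppedCenteredSum_of_le (hTn ω)]
  calc _ ≤ ∫ ω, ∑ s ∈ Icc 1 n, stopWeight n s * stoppedCenteredSum Y m T s ω ^ 2 ∂P :=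
        integral_mono_of_nonneg (ae_of_all _ fun ω => by positivity)
          (integrable_finsetSum _ fun s _ => (hM s).integrable_sq.const_mul _)
          (ae_of_all _ hpoint)
    _ = σ2 * ∫ ω, ∑ s ∈ Icc 1 n, stopWeight n s * ((min (T ω) s : ℕ) : ℝ) ∂P := by
        rw [integral_finsetSum _ fun s _ => (hM s).integrable_sq.const_mul _,
          integral_finsetSum _ fun s _ =>
            (integrable_comp_of_le hTmeas hTn fun t => ((min t s : ℕ) : ℝ)).const_mul _,
          mul_sum]
        refine sum_congr rfl fun s _ => ?_
        rw [integral_const_mul, integral_const_mul,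
          integral_sq_stoppedCenteredSum hY hindep hL2 hmean hvar hT]
        ring
    _ = σ2 * ∫ ω, (harmonic (T ω) : ℝ) ∂P := by
        rw [integral_congr_ae (ae_of_all _ fun ω => sum_stopWeight_mul_min (hTn ω))]

end StoppedSum

theorem stmt11_general {Ω : Type*} [MeasurableSpace Ω] (P : Measure Ω) [IsProbabilityMeasure P]
    (θ : ℝ) (hθ : θ ∈ Set.Icc (0:ℝ) 1)
    -- `Y i` is the `(i+1)`-st coin flip, so `Y 0, Y 1, …` play the roles of `Y_1, Y_2, …`
    (Y : ℕ → Ω → ℝ) (hYmeas : ∀ i, Measurable (Y i))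
    (hindep : iIndepFun Y P)
    (hlaw : ∀ i, P.map (Y i) = bernoulliLaw θ)
    (n : ℕ)
    (T : Ω → ℕ) (hT1 : ∀ ω, 1 ≤ T ω) (hTn : ∀ ω, T ω ≤ n)
    -- `T` is a stopping time for the natural filtration `σ(Y_1, …, Y_t)`
    (hTstop : ∀ t : ℕ,
      MeasurableSet[⨆ i ∈ Finset.range t, MeasurableSpace.comap (Y i) inferInstance]
        {ω | T ω = t}) :
    ∫ ω, ((∑ i ∈ Finset.range (T ω), Y i ω) - θ * (T ω : ℝ)) ^ 2 / (T ω : ℝ) ∂P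
      ≤ 2 * θ * (1 - θ) * ∫ ω, Real.logb 2 ((T ω : ℝ) + 1) ∂P := by
  have hT : ∀ s, MeasurableSet[sigmaBefore Y s] {ω | s < T ω} :=
    measurableSet_sigmaBefore_lt hTstop
  have hharmonic := integral_sq_stoppedCenteredSum_div_le hYmeas hindep
    (fun i => memLp_of_map_eq_bernoulliLaw (hYmeas i) (hlaw i) 2)
    (fun i => integral_of_map_eq_bernoulliLaw hθ (hYmeas i) (hlaw i))
    (fun i => variance_of_map_eq_bernoulliLaw hθ (hYmeas i) (hlaw i)) hT hT1 hTn
  have hTmeas : Measurable T := measurable_of_Ioi fun t => sigmaBefore_le hYmeas t _ (hT t)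
  simp_rw [stoppedCenteredSum_of_le (hTn _)] at hharmonic
  calc _ ≤ θ * (1 - θ) * ∫ ω, (harmonic (T ω) : ℝ) ∂P := hharmonic
    _ ≤ θ * (1 - θ) * ∫ ω, 2 * Real.logb 2 ((T ω : ℝ) + 1) ∂P :=
        mul_le_mul_of_nonneg_left
          (integral_mono (integrable_comp_of_le hTmeas hTn fun t => (harmonic t : ℝ))
            (integrable_comp_of_le hTmeas hTn fun t => 2 * Real.logb 2 ((t : ℝ) + 1))
            fun ω => harmonic_le_two_mul_logb (T ω))
          (mul_nonneg hθ.1 (sub_nonneg.mpr hθ.2))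
    _ = _ := by rw [integral_const_mul]; ring

theorem stmt11 {Ω : Type*} [MeasurableSpace Ω] (P : Measure Ω) [IsProbabilityMeasure P]
    (θ : ℝ) (hθ : θ ∈ Set.Icc (0:ℝ) 1)
    -- `Y i` is the `(i+1)`-st coin flip, so `Y 0, Y 1, …` play the roles of `Y_1, Y_2, …`
    (Y : ℕ → Ω → ℝ) (hYmeas : ∀ i, Measurable (Y i))
    (hindep : iIndepFun Y P)
    (hlaw : ∀ i, P.map (Y i) = bernoulliLaw θ)
    (n : ℕ) (hn : 1 ≤ n)
    (T : Ω → ℕ) (hT1 : ∀ ω, 1 ≤ T ω) (hTn : ∀ ω, T ω ≤ n)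
    -- `T` is a stopping time for the natural filtration `σ(Y_1, …, Y_t)`
    (hTstop : ∀ t : ℕ,
      MeasurableSet[⨆ i ∈ Finset.range t, MeasurableSpace.comap (Y i) inferInstance]
        {ω | T ω = t}) :
    ∫ ω, ((∑ i ∈ Finset.range (T ω), Y i ω) - θ * (T ω : ℝ)) ^ 2 / (T ω : ℝ) ∂P
      ≤ 2 * θ * (1 - θ) * ∫ ω, Real.logb 2 ((T ω : ℝ) + 1) ∂P :=
  stmt11_general P θ hθ Y hYmeas hindep hlaw n T hT1 hTn hTstop
end

section
/- For each n ≥ 1 let p_n be a probability mass function on the set {0,1}ⁿ of binary strings of length n, let X_n be a random variable with law p_n, and set L_n := (1/n)·log₂(1/p_n(X_n)). Then the family {L_n : n ≥ 1} is uniformly integrable; in particular, lim_{K→∞} sup_n E[L_n·1{L_n > K}] = 0. -/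
/-!
An atom of mass `q` contributes to `E[L_n · 1{L_n > K}]` only when `q < 2^(-nK)`, and then at most
`q log₂ (1/q) ≤ (2 / ln 2) √q ≤ (2 / ln 2) 2^(-nK/2)`. Summing over the `2ⁿ` strings gives
`(2 / ln 2) (2 · 2^(-K/2))ⁿ`, which for `K ≥ 2` is at most `(2 / ln 2) · 2 · 2^(-K/2)` uniformly
in `n`, and this tends to `0`.
-/

open Filter Real Topology

lemma mul_logb_inv_le_sqrt {b q : ℝ} (hb : 1 < b) (hq : 0 ≤ q) :
    q * logb b (1 / q) ≤ 2 / log b * √q := by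
  rcases hq.eq_or_lt with rfl | hq
  · simp
  have hs : 0 < √q := sqrt_pos.mpr hq
  have hlog : log (1 / q) ≤ 2 / √q := by
    have h := log_le_sub_one_of_pos (inv_pos.mpr hs)
    have hsq : 1 / q = (√q)⁻¹ ^ 2 := by rw [inv_pow, sq_sqrt hq.le, one_div]
    rw [hsq, log_pow, div_eq_mul_inv]
    push_cast
    linarith
  have hb' : 0 < log b := log_pos hb
  calc q * logb b (1 / q) = q * log (1 / q) / log b := by rw [logb, mul_div_assoc]
    _ ≤ q * (2 / √q) / log b := by gcongr
    _ = 2 / log b * √q := by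
        rw [mul_div_left_comm, div_sqrt]
        ring

lemma Real.sqrt_pow {x : ℝ} (hx : 0 ≤ x) (n : ℕ) : √(x ^ n) = √x ^ n := by
  rw [sqrt_eq_iff_eq_sq (by positivity) (by positivity), pow_right_comm, sq_sqrt hx]

/-- The value of `L_n` at an outcome of probability `q`. -/
noncomputable def normalizedSelfInfo (n : ℕ) (q : ℝ) : ℝ := 1 / (n : ℝ) * logb 2 (1 / q)

/-- The contribution of an outcome of probability `q` to `E[L_n · 1{L_n > K}]`. -/
noncomputable def selfInfoTailSummand (n : ℕ) (K q : ℝ) : ℝ :=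
  q * normalizedSelfInfo n q * if K < normalizedSelfInfo n q then 1 else 0

lemma lt_pow_of_lt_normalizedSelfInfo {n : ℕ} {K q : ℝ} (hn : 0 < n) (hq : 0 < q)
    (h : K < normalizedSelfInfo n q) : q < ((2 : ℝ) ^ (-K)) ^ n := by
  have hn' : (0 : ℝ) < n := Nat.cast_pos.mpr hn
  rwa [normalizedSelfInfo, one_div, ← div_eq_inv_mul, lt_div_iff₀ hn', one_div, logb_inv,
    lt_neg, logb_lt_iff_lt_rpow one_lt_two hq, ← neg_mul, rpow_mul_natCast zero_le_two] at h

lemma selfInfoTailSummand_nonneg {n : ℕ} {K q : ℝ} (hK : 0 ≤ K) (hq : 0 ≤ q) :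
    0 ≤ selfInfoTailSummand n K q := by
  unfold selfInfoTailSummand
  split_ifs with h
  · exact mul_nonneg (mul_nonneg hq (hK.trans h.le)) zero_le_one
  · rw [mul_zero]

lemma selfInfoTailSummand_le {n : ℕ} {K q : ℝ} (hn : 0 < n) (hK : 0 ≤ K) (hq : 0 ≤ q) :
    selfInfoTailSummand n K q ≤ 2 / log 2 * √((2 : ℝ) ^ (-K)) ^ n := by
  unfold selfInfoTailSummand
  split_ifs with h
  · rcases hq.eq_or_lt with rfl | hq
    · simp only [zero_mul]; positivity
    have hn' : (0 : ℝ) < n := Nat.cast_pos.mpr hn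
    have hI : 0 ≤ logb 2 (1 / q) :=
      (mul_nonneg_iff_of_pos_left (by positivity)).mp (hK.trans h.le)
    have hn1 : 1 / (n : ℝ) ≤ 1 := by
      rw [div_le_one hn']; exact_mod_cast hn
    calc q * normalizedSelfInfo n q * 1 ≤ q * logb 2 (1 / q) := by
          rw [mul_one, normalizedSelfInfo]
          gcongr
          exact mul_le_of_le_one_left hI hn1
      _ ≤ 2 / log 2 * √q := mul_logb_inv_le_sqrt one_lt_two hq.le
      _ ≤ 2 / log 2 * √(((2 : ℝ) ^ (-K)) ^ n) := by
          gcongr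
          exact (lt_pow_of_lt_normalizedSelfInfo hn hq h).le
      _ = 2 / log 2 * √((2 : ℝ) ^ (-K)) ^ n := by rw [sqrt_pow (by positivity)]
  · rw [mul_zero]; positivity

lemma sum_selfInfoTailSummand_le {n : ℕ} {K : ℝ} (hn : 0 < n) (hK : 2 ≤ K)
    {q : (Fin n → Bool) → ℝ} (hq : ∀ x, 0 ≤ q x) :
    ∑ x, selfInfoTailSummand n K (q x) ≤ 2 / log 2 * (2 * √((2 : ℝ) ^ (-K))) := by
  have hhalf : 2 * √((2 : ℝ) ^ (-K)) ≤ 1 := by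
    have : (2 : ℝ) ^ (-K) ≤ 1 / 4 := by
      calc (2 : ℝ) ^ (-K) ≤ 2 ^ (-2 : ℝ) := rpow_le_rpow_of_exponent_le one_le_two (by linarith)
        _ = 1 / 4 := by norm_num [rpow_neg]
    nlinarith [sq_sqrt (by positivity : (0 : ℝ) ≤ 2 ^ (-K)), sqrt_nonneg ((2 : ℝ) ^ (-K))]
  calc ∑ x, selfInfoTailSummand n K (q x)
        ≤ ∑ _x : Fin n → Bool, 2 / log 2 * √((2 : ℝ) ^ (-K)) ^ n :=
        Finset.sum_le_sum fun x _ => selfInfoTailSummand_le hn (by linarith) (hq x)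
    _ = 2 / log 2 * (2 * √((2 : ℝ) ^ (-K))) ^ n := by
        rw [Finset.sum_const, Finset.card_univ, Fintype.card_fun, Fintype.card_bool,
          Fintype.card_fin, nsmul_eq_mul, mul_pow]
        push_cast
        ring
    _ ≤ 2 / log 2 * (2 * √((2 : ℝ) ^ (-K))) := by
        gcongr
        exact pow_le_of_le_one (by positivity) hhalf hn.ne'

theorem stmt15_general (p : ∀ n : ℕ, (Fin n → Bool) → ℝ)
    (hp : ∀ n x, 0 ≤ p n x) :
    -- `lim_{K → ∞} sup_{n ≥ 1} E[L_n · 1{L_n > K}] = 0`, where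
    -- `L_n = (1/n) log₂ (1/p_n(X_n))` with `X_n ~ p_n`.
    Tendsto (fun K : ℝ => ⨆ n : {m : ℕ // 1 ≤ m},
        ∑ x, p n x * ((1 / ((n : ℕ) : ℝ)) * Real.logb 2 (1 / p n x)) *
          (if K < (1 / ((n : ℕ) : ℝ)) * Real.logb 2 (1 / p n x) then 1 else 0))
      atTop (nhds 0) := by
  have hbound : Tendsto (fun K : ℝ => 2 / log 2 * (2 * √((2 : ℝ) ^ (-K)))) atTop (𝓝 0) := by
    have h := (((tendsto_rpow_atBot_of_base_gt_one 2 one_lt_two).comp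
      tendsto_neg_atTop_atBot).sqrt.const_mul 2).const_mul (2 / log 2)
    simpa using h
  refine tendsto_of_tendsto_of_tendsto_of_le_of_le' tendsto_const_nhds hbound ?_ ?_
  · filter_upwards [eventually_ge_atTop 0] with K hK
    exact Real.iSup_nonneg fun n =>
      Finset.sum_nonneg fun x _ => selfInfoTailSummand_nonneg hK (hp n x)
  · filter_upwards [eventually_ge_atTop 2] with K hK
    have : Nonempty {m : ℕ // 1 ≤ m} := ⟨⟨1, le_rfl⟩⟩
    exact ciSup_le fun n => sum_selfInfoTailSummand_le n.2 hK (hp n)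

theorem stmt15 (p : ∀ n : ℕ, (Fin n → Bool) → ℝ)
    (hp : ∀ n x, 0 ≤ p n x) (hsum : ∀ n : ℕ, 1 ≤ n → ∑ x, p n x = 1) :
    -- `lim_{K → ∞} sup_{n ≥ 1} E[L_n · 1{L_n > K}] = 0`, where
    -- `L_n = (1/n) log₂ (1/p_n(X_n))` with `X_n ~ p_n`.
    Tendsto (fun K : ℝ => ⨆ n : {m : ℕ // 1 ≤ m},
        ∑ x, p n x * ((1 / ((n : ℕ) : ℝ)) * Real.logb 2 (1 / p n x)) *
          (if K < (1 / ((n : ℕ) : ℝ)) * Real.logb 2 (1 / p n x) then 1 else 0))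
      atTop (nhds 0) :=
  stmt15_general p hp
end
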